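/- arXiv:1209.1578 — 15 statements merged into one kernel-verified Lean document; each statement's English description precedes it below -/
import Mathlib

section
/- Let m, n be positive integers and let α be an n×m complex matrix, viewed as a linear map ℂ^m → ℂ^n. Then the orbit {α · g⁻¹ : g ∈ SL(m,ℂ)} is a closed subset of the space of n×m complex matrices (with its standard topology) if and only if α = 0 or α is injective. -/
/-!
If `α v = 0` for some `v ≠ 0`, then for every `t ≠ 0` the matrix
`t • (1 + (t⁻ᵐ - 1) • v wᵀ)`, with `wᵀ v = 1`, has determinant `1` and sends `α` to `t • α`;
letting `t → 0` puts `0` in the closure of the orbit, so the orbit is closed only if it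
contains `0`, i.e. only if `α = 0`. Conversely, if `α` is injective it has a left inverse `β`,
and the orbit is cut out by the closed conditions `α (β X) = X` and `det (β X) = 1`.
-/

open Topology

namespace Matrix

variable {m n K : Type*} [Fintype n] [DecidableEq n]

def slOrbit [CommRing K] (A : Matrix m n K) : Set (Matrix m n K) :=
  Set.range fun g : SpecialLinearGroup n K => A * (g : Matrix n n K)

theorem exists_mul_eq_one_of_injective_mulVecLin [Fintype m] [DecidableEq m] [Field K]
    {A : Matrix m n K} (hA : Function.Injective A.mulVecLin) : ∃ B : Matrix n m K, B * A = 1 := by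
  obtain ⟨f, hf⟩ := LinearMap.exists_leftInverse_of_injective A.mulVecLin
    (LinearMap.ker_eq_bot.mpr hA)
  refine ⟨LinearMap.toMatrix' f, ?_⟩
  have := congrArg LinearMap.toMatrix' hf
  rwa [LinearMap.toMatrix'_comp, ← Matrix.toLin'_apply', LinearMap.toMatrix'_toLin',
    LinearMap.toMatrix'_id] at this

theorem exists_specialLinearGroup_mul_eq_smul [Field K] {A : Matrix m n K} {v : n → K}
    (hv : v ≠ 0) (hAv : A *ᵥ v = 0) {t : K} (ht : t ≠ 0) :
    ∃ g : SpecialLinearGroup n K, A * (g : Matrix n n K) = t • A := by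
  obtain ⟨i, hi⟩ : ∃ i, v i ≠ 0 := Function.ne_iff.mp hv
  set w : n → K := Pi.single i (v i)⁻¹
  have hwv : w ⬝ᵥ v = 1 := by simp [w, inv_mul_cancel₀ hi]
  set c : K := t⁻¹ ^ Fintype.card n - 1
  set M : Matrix n n K := t • (1 + vecMulVec (c • v) w)
  have hdet : M.det = 1 := by
    rw [det_smul, vecMulVec_eq Unit, det_one_add_replicateCol_mul_replicateRow, dotProduct_smul,
      hwv, smul_eq_mul, mul_one, add_sub_cancel, ← mul_pow, mul_inv_cancel₀ ht, one_pow]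
  refine ⟨⟨M, hdet⟩, ?_⟩
  simp [M, Matrix.mul_add, mul_vecMulVec, hAv]

theorem zero_mem_closure_slOrbit [NontriviallyNormedField K]
    {A : Matrix m n K} {v : n → K} (hv : v ≠ 0) (hAv : A *ᵥ v = 0) :
    (0 : Matrix m n K) ∈ closure A.slOrbit := by
  have h0 : (0 : K) ∈ closure {0}ᶜ :=
    mem_closure_iff_nhdsWithin_neBot.mpr (NormedField.nhdsNE_neBot 0)
  have hmaps : Set.MapsTo (fun t : K => t • A) {0}ᶜ A.slOrbit := fun _ ht =>
    (exists_specialLinearGroup_mul_eq_smul hv hAv ht).imp fun _ => id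
  simpa using (continuous_id.smul continuous_const).continuousWithinAt.mem_closure h0 hmaps

theorem isClosed_slOrbit_of_injective [Fintype m] [DecidableEq m] [Field K]
    [TopologicalSpace K] [IsTopologicalRing K] [T2Space K] {A : Matrix m n K}
    (hA : Function.Injective A.mulVecLin) : IsClosed A.slOrbit := by
  obtain ⟨B, hBA⟩ := exists_mul_eq_one_of_injective_mulVecLin hA
  have hrange : A.slOrbit = {X | A * (B * X) = X} ∩ {X | (B * X).det = 1} := by
    ext X
    constructor
    · rintro ⟨g, rfl⟩
      have hBAg : B * (A * (g : Matrix n n K)) = g := by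
        rw [← Matrix.mul_assoc, hBA, Matrix.one_mul]
      simpa only [Set.mem_inter_iff, Set.mem_ofPred_eq, hBAg, true_and] using g.prop
    · rintro ⟨hX, hdet⟩
      exact ⟨⟨B * X, hdet⟩, hX⟩
  rw [hrange]
  have hB : Continuous fun X : Matrix m n K => B * X := continuous_const.matrix_mul continuous_id
  exact (isClosed_eq (continuous_const.matrix_mul hB) continuous_id).inter
    (isClosed_eq hB.matrix_det continuous_const)

theorem isClosed_slOrbit_iff [Fintype m] [DecidableEq m] [NontriviallyNormedField K]
    (A : Matrix m n K) : IsClosed A.slOrbit ↔ A = 0 ∨ Function.Injective A.mulVecLin := by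
  refine ⟨fun hclosed => or_iff_not_imp_right.mpr fun hA => ?_, ?_⟩
  · obtain ⟨v, hv, hv0⟩ := Submodule.exists_mem_ne_zero_of_ne_bot
      (mt LinearMap.ker_eq_bot.mp hA)
    obtain ⟨g, hg⟩ := hclosed.closure_eq ▸ zero_mem_closure_slOrbit hv0 (LinearMap.mem_ker.mp hv)
    have := congrArg (· * ((g⁻¹ : SpecialLinearGroup n K) : Matrix n n K)) hg
    rwa [Matrix.mul_assoc, ← SpecialLinearGroup.coe_mul, mul_inv_cancel,
      SpecialLinearGroup.coe_one, Matrix.mul_one, Matrix.zero_mul] at this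
  · rintro (rfl | hA)
    · have horbit : (0 : Matrix m n K).slOrbit = {0} := by simp [slOrbit, Set.range_const]
      exact horbit ▸ isClosed_singleton
    · exact isClosed_slOrbit_of_injective hA

end Matrix

theorem statement0_general (m n : ℕ)
    (α : Matrix (Fin n) (Fin m) ℂ) :
    IsClosed {A : Matrix (Fin n) (Fin m) ℂ |
        ∃ g : Matrix.SpecialLinearGroup (Fin m) ℂ,
          A = α * (↑(g⁻¹) : Matrix (Fin m) (Fin m) ℂ)} ↔
      (α = 0 ∨ Function.Injective α.mulVecLin) := by
  have horbit : {A : Matrix (Fin n) (Fin m) ℂ |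
      ∃ g : Matrix.SpecialLinearGroup (Fin m) ℂ,
        A = α * (↑(g⁻¹) : Matrix (Fin m) (Fin m) ℂ)} = α.slOrbit := by
    ext A
    constructor
    · rintro ⟨g, rfl⟩
      exact ⟨g⁻¹, rfl⟩
    · rintro ⟨g, rfl⟩
      exact ⟨g⁻¹, by rw [inv_inv]⟩
  rw [horbit]
  exact α.isClosed_slOrbit_iff

/-- For a nonzero-size complex `n × m` matrix `α`, the orbit
`{α g⁻¹ : g ∈ SL(m, ℂ)}` is closed in the space of `n × m` complex matrices
(with its standard topology) if and only if `α = 0` or `α` is injective as a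
linear map `ℂ^m → ℂ^n`. -/
theorem statement0 (m n : ℕ) (hm : 0 < m) (hn : 0 < n)
    (α : Matrix (Fin n) (Fin m) ℂ) :
    IsClosed {A : Matrix (Fin n) (Fin m) ℂ |
        ∃ g : Matrix.SpecialLinearGroup (Fin m) ℂ,
          A = α * (↑(g⁻¹) : Matrix (Fin m) (Fin m) ℂ)} ↔
      (α = 0 ∨ Function.Injective α.mulVecLin) :=
  statement0_general m n α
end

section
/- Fix integers r ≥ 2 and 0 ≤ n_1 ≤ n_2 ≤ … ≤ n_r = n, and set V_i = ℂ^{n_i}, V_0 = 0. Let α = (α_1, …, α_{r−1}) be a tuple of linear maps α_i : V_i → V_{i+1} (complex n_{i+1}×n_i matrices), and set α_0 = 0. The group SL = ∏_{i=1}^{r−1} SL(n_i,ℂ) acts by α_i ↦ g_{i+1} α_i g_i⁻¹ for i = 1,…,r−2 and α_{r−1} ↦ α_{r−1} g_{r−1}⁻¹. If the SL-orbit of α is a closed subset of the product matrix space, then for each i = 1,…,r−1 at least one of the following holds: (1) α_i is injective, or (2) V_i is the internal direct sum of the range of α_{i−1} and ker α_i, or (3) α_{i−1} is surjective. -/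
/-!
Write `R = range α_{i-1}` and `K = ker α_i`, and suppose none of the three alternatives holds.
Choose subspaces `0 ≠ U ≤ W ≠ V_i` with `U ≤ K` and `R ≤ W`: `U = R ⊓ K, W = R` if `R ⊓ K ≠ 0`,
and `U = K, W = R ⊔ K` if `R ⊔ K ≠ V_i`. Split `V_i = U ⊕ U' ⊕ U''` with `U ⊕ U' = W`, and let
`λ(t) ∈ SL(V_i)` act by `t ^ dim U''`, `1`, `t ^ (-dim U)` on the three summands. Because
`R ≤ W` and `U ≤ K`, the representation `λ(t) • α` converges as `t → 0`: `α_{i-1}` and `α_i`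
become `Q α_{i-1}` and `α_i Q`, where `Q` is the projection onto `U'` along `U ⊕ U''`. A closed
orbit contains this limit, so the ranks of `α_{i-1}` and `α_i` are unchanged. But `Q` kills `U`,
so `rank (Q α_{i-1}) < rank α_{i-1}` in the first case, and
`rank (α_i Q) ≤ dim W - dim K < rank α_i` in the second.
-/

open Matrix Module Filter Topology

theorem Finset.prod_zpow_eq_zpow_sum {ι G₀ : Type*} [CommGroupWithZero G₀] {a : G₀} (ha : a ≠ 0)
    (s : Finset ι) (f : ι → ℤ) : ∏ i ∈ s, a ^ f i = a ^ ∑ i ∈ s, f i := by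
  classical
  induction s using Finset.induction_on with
  | empty => simp
  | insert i s hi ih => rw [prod_insert hi, sum_insert hi, ih, zpow_add₀ ha]

namespace Module.Basis

section CommRing

variable {R : Type*} [CommRing R] {n ι : Type*} [Fintype n] [DecidableEq n] [Fintype ι]
  [DecidableEq ι]

noncomputable def scalingMatrix (b : Basis ι R (n → R)) : (ι → R) →ₐ[R] Matrix n n R :=
  (LinearMap.toMatrixAlgEquiv' : _ ≃ₐ[R] Matrix n n R).toAlgHom.comp <|
    (Matrix.toLinAlgEquiv b).toAlgHom.comp (diagonalAlgHom R)

variable (b : Basis ι R (n → R))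

theorem scalingMatrix_apply (c : ι → R) :
    b.scalingMatrix c = LinearMap.toMatrix' (Matrix.toLin b b (diagonal c)) := rfl

theorem scalingMatrix_mulVec_self (c : ι → R) (i : ι) : b.scalingMatrix c *ᵥ b i = c i • b i := by
  simp [scalingMatrix, LinearMap.toMatrixAlgEquiv', diagonal_apply]

theorem det_scalingMatrix (c : ι → R) : (b.scalingMatrix c).det = ∏ i, c i := by
  rw [scalingMatrix_apply, LinearMap.det_toMatrix', LinearMap.det_toLin, det_diagonal]

end CommRing

variable {n ι : Type*} [Fintype n] [DecidableEq n] [Fintype ι] [DecidableEq ι]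
  (b : Basis ι ℂ (n → ℂ)) (w : ι → ℤ)

/- Dropping the negative weights leaves a polynomial in `t`; the negative-weight part is a
multiple of the projection onto the span of the `b i` with `w i < 0`. -/
theorem scalingMatrix_zpow_eq (t : ℂ) :
    b.scalingMatrix (fun i => t ^ w i) =
      b.scalingMatrix (fun i => if w i < 0 then 0 else t ^ (w i).toNat) +
        b.scalingMatrix (fun i => t ^ w i) *
          b.scalingMatrix (fun i => if w i < 0 then 1 else 0) := by
  rw [← map_mul, ← map_add]
  congr 1
  funext i
  simp only [Pi.add_apply, Pi.mul_apply]
  split_ifs with h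
  · simp
  · simp [← zpow_natCast, Int.toNat_of_nonneg (not_lt.mp h)]

theorem continuous_scalingMatrix_truncatedPow :
    Continuous fun t : ℂ => b.scalingMatrix (fun i => if w i < 0 then 0 else t ^ (w i).toNat) :=
  (b.scalingMatrix.toLinearMap.continuous_of_finiteDimensional).comp <|
    continuous_pi fun i => by split_ifs <;> fun_prop

theorem scalingMatrix_truncatedPow_zero :
    b.scalingMatrix (fun i => if w i < 0 then 0 else (0 : ℂ) ^ (w i).toNat) =
      b.scalingMatrix (fun i => if w i = 0 then 1 else 0) := by
  congr 1
  funext i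
  rcases lt_trichotomy (w i) 0 with h | h | h
  · simp [h, h.ne]
  · simp [h]
  · simp [h, h.ne', not_lt.mpr h.le, Int.toNat_eq_zero]

theorem tendsto_scalingMatrix_zpow_mul {m : Type*} [Fintype m] {A : Matrix n m ℂ}
    (hA : b.scalingMatrix (fun i => if w i < 0 then 1 else 0) * A = 0) :
    Tendsto (fun t : ℂ => b.scalingMatrix (fun i => t ^ w i) * A) (𝓝[≠] 0)
      (𝓝 (b.scalingMatrix (fun i => if w i = 0 then 1 else 0) * A)) := by
  have hlim := ((b.continuous_scalingMatrix_truncatedPow w).matrix_mul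
    (continuous_const (y := A))).tendsto 0
  rw [scalingMatrix_truncatedPow_zero] at hlim
  refine (hlim.mono_left nhdsWithin_le_nhds).congr fun t => ?_
  rw [scalingMatrix_zpow_eq b w t, Matrix.add_mul, Matrix.mul_assoc, hA, Matrix.mul_zero, add_zero]

theorem tendsto_mul_scalingMatrix_zpow {m : Type*} [Fintype m] {B : Matrix m n ℂ}
    (hB : B * b.scalingMatrix (fun i => if w i < 0 then 1 else 0) = 0) :
    Tendsto (fun t : ℂ => B * b.scalingMatrix (fun i => t ^ w i)) (𝓝[≠] 0)
      (𝓝 (B * b.scalingMatrix (fun i => if w i = 0 then 1 else 0))) := by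
  have hlim := ((continuous_const (y := B)).matrix_mul
    (b.continuous_scalingMatrix_truncatedPow w)).tendsto 0
  rw [scalingMatrix_truncatedPow_zero] at hlim
  refine (hlim.mono_left nhdsWithin_le_nhds).congr fun t => ?_
  rw [scalingMatrix_zpow_eq b w t, ← map_mul, mul_comm (fun i => t ^ w i), map_mul,
    Matrix.mul_add, ← Matrix.mul_assoc B, hB, Matrix.zero_mul, add_zero]

theorem exists_specialLinearGroup_scalingMatrix_zpow (hw : ∑ i, w i = 0) {t : ℂ} (ht : t ≠ 0) :
    ∃ g : Matrix.SpecialLinearGroup n ℂ, (g : Matrix n n ℂ) = b.scalingMatrix (fun i => t ^ w i) ∧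
      ((g⁻¹ : Matrix.SpecialLinearGroup n ℂ) : Matrix n n ℂ) =
        b.scalingMatrix (fun i => t ^ (-w i)) := by
  have hdet (w' : ι → ℤ) (hw' : ∑ i, w' i = 0) : (b.scalingMatrix fun i => t ^ w' i).det = 1 := by
    rw [det_scalingMatrix, Finset.prod_zpow_eq_zpow_sum ht, hw', zpow_zero]
  let g : Matrix.SpecialLinearGroup n ℂ := ⟨_, hdet w hw⟩
  have hginv : g⁻¹ = ⟨_, hdet (-w) (by simp [hw])⟩ := by
    refine inv_eq_of_mul_eq_one_right (Subtype.ext ?_)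
    change b.scalingMatrix _ * b.scalingMatrix _ = (1 : Matrix n n ℂ)
    rw [← map_mul, ← map_one b.scalingMatrix]
    congr 1
    funext i
    simp [_root_.zpow_neg, mul_inv_cancel₀ (zpow_ne_zero _ ht)]
  exact ⟨g, rfl, by rw [hginv]; rfl⟩

end Module.Basis

namespace DirectSum.IsInternal

variable {R : Type*} [CommRing R] {n : Type*} [Fintype n] [DecidableEq n]
  {κ : Type*} [Fintype κ] [DecidableEq κ] {β : κ → Type*} [∀ k, Fintype (β k)]
  [∀ k, DecidableEq (β k)] {N : κ → Submodule R (n → R)}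
  (hN : DirectSum.IsInternal N) (v : ∀ k, Basis (β k) R (N k))

theorem collectedBasis_scalingMatrix_mulVec_of_mem (c : κ → R) {k : κ} {x : n → R}
    (hx : x ∈ N k) : (hN.collectedBasis v).scalingMatrix (fun i => c i.1) *ᵥ x = c k • x := by
  have : ((hN.collectedBasis v).scalingMatrix (fun i => c i.1)).mulVecLin ∘ₗ (N k).subtype
      = c k • (N k).subtype := (v k).ext fun a => by
    simpa using (hN.collectedBasis v).scalingMatrix_mulVec_self (fun i => c i.1) ⟨k, a⟩
  exact LinearMap.congr_fun this ⟨x, hx⟩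

theorem le_ker_collectedBasis_scalingMatrix {c : κ → R} {k : κ} (hc : c k = 0) :
    N k ≤ LinearMap.ker ((hN.collectedBasis v).scalingMatrix (fun i => c i.1)).mulVecLin :=
  fun x hx => by simp [hN.collectedBasis_scalingMatrix_mulVec_of_mem v c hx, hc]

theorem range_collectedBasis_scalingMatrix_le (c : κ → R) {U : Submodule R (n → R)}
    (hU : ∀ k, c k ≠ 0 → N k ≤ U) :
    LinearMap.range ((hN.collectedBasis v).scalingMatrix (fun i => c i.1)).mulVecLin ≤ U := by
  rw [LinearMap.range_eq_map, ← hN.submodule_iSup_eq_top, Submodule.map_iSup]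
  refine iSup_le fun k => ?_
  rintro _ ⟨x, hx, rfl⟩
  rw [Matrix.mulVecLin_apply, hN.collectedBasis_scalingMatrix_mulVec_of_mem v c hx]
  by_cases hc : c k = 0
  · simp [hc]
  · exact U.smul_mem _ (hU k hc hx)

end DirectSum.IsInternal

theorem Submodule.exists_isInternal_fin_three {K V : Type*} [DivisionRing K] [AddCommGroup V]
    [Module K V] {U W : Submodule K V} (hUW : U ≤ W) :
    ∃ N : Fin 3 → Submodule K V, DirectSum.IsInternal N ∧ N 0 = U ∧ N 0 ⊔ N 1 = W := by
  obtain ⟨C, hC⟩ := U.exists_isCompl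
  obtain ⟨U'', hU''⟩ := W.exists_isCompl
  have hsup : U ⊔ C ⊓ W = W := by rw [← sup_inf_assoc_of_le C hUW, hC.sup_eq_top, top_inf_eq]
  have hdisj : Disjoint U (C ⊓ W) := hC.disjoint.mono_right inf_le_left
  have hW : Disjoint (U ⊔ C ⊓ W) U'' := by rw [hsup]; exact hU''.disjoint
  refine ⟨![U, C ⊓ W, U''], DirectSum.isInternal_submodule_of_iSupIndep_of_iSup_eq_top ?_ ?_,
    rfl, hsup⟩
  · refine iSupIndep_fin_three.mpr ⟨?_, ?_, ?_⟩
    · exact hdisj.disjoint_sup_right_of_disjoint_sup_left hW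
    · rw [sup_comm]
      exact hdisj.symm.disjoint_sup_right_of_disjoint_sup_left (sup_comm U _ ▸ hW)
    · exact hW.symm
  · simp [hsup, hU''.sup_eq_top]

theorem Matrix.mul_eq_zero_of_range_le_ker {R : Type*} [CommRing R] {l m n : Type*} [Fintype m]
    [Fintype n] [DecidableEq m] [DecidableEq n] {A : Matrix l m R} {B : Matrix m n R}
    (h : LinearMap.range B.mulVecLin ≤ LinearMap.ker A.mulVecLin) : A * B = 0 :=
  Matrix.toLin'.injective <| by
    rw [map_zero, Matrix.toLin'_apply', Matrix.mulVecLin_mul]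
    exact LinearMap.range_le_ker_iff.mp h

theorem Matrix.rank_mul_lt_of_not_disjoint {K : Type*} [Field K] {l m n : Type*} [Fintype m]
    [Fintype n] {Q : Matrix l m K} {A : Matrix m n K}
    (h : ¬ Disjoint (LinearMap.range A.mulVecLin) (LinearMap.ker Q.mulVecLin)) :
    (Q * A).rank < A.rank := by
  obtain ⟨_, ⟨x, rfl⟩, hQx, hAx⟩ : ∃ y ∈ LinearMap.range A.mulVecLin,
      y ∈ LinearMap.ker Q.mulVecLin ∧ y ≠ 0 := by
    simpa [Submodule.disjoint_def] using h
  have hker : LinearMap.ker A.mulVecLin < LinearMap.ker (Q * A).mulVecLin := by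
    rw [Matrix.mulVecLin_mul]
    refine lt_of_le_of_ne (LinearMap.ker_le_ker_comp _ _) fun heq => hAx ?_
    have : x ∈ LinearMap.ker (Q.mulVecLin ∘ₗ A.mulVecLin) := hQx
    rwa [← heq] at this
  have := Submodule.finrank_lt_finrank_of_lt hker
  have := LinearMap.finrank_range_add_finrank_ker A.mulVecLin
  have := LinearMap.finrank_range_add_finrank_ker (Q * A).mulVecLin
  unfold Matrix.rank
  omega

section QuiverOrbit

variable {dims : ℕ → ℕ}

def slOrbit (m : ℕ) (α : ∀ i : ℕ, Matrix (Fin (dims (i+1))) (Fin (dims i)) ℂ) :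
    Set (∀ i : ℕ, Matrix (Fin (dims (i+1))) (Fin (dims i)) ℂ) :=
  {A | ∃ g : ∀ i : ℕ, Matrix.SpecialLinearGroup (Fin (dims i)) ℂ,
    g (m+1) = 1 ∧
    (∀ i ≤ m, A i = (↑(g (i+1)) : Matrix (Fin (dims (i+1))) (Fin (dims (i+1))) ℂ) *
        α i * (↑((g i)⁻¹) : Matrix (Fin (dims i)) (Fin (dims i)) ℂ)) ∧
    (∀ i, m + 1 ≤ i → A i = α i)}

variable {m : ℕ} {α : ∀ i : ℕ, Matrix (Fin (dims (i+1))) (Fin (dims i)) ℂ}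

theorem rank_eq_of_mem_slOrbit {A : ∀ i : ℕ, Matrix (Fin (dims (i+1))) (Fin (dims i)) ℂ}
    (hA : A ∈ slOrbit m α) {i : ℕ} (hi : i ≤ m) : (A i).rank = (α i).rank := by
  obtain ⟨g, -, hg, -⟩ := hA
  have hdet (k : ℕ) (h : Matrix.SpecialLinearGroup (Fin k) ℂ) :
      IsUnit (h : Matrix (Fin k) (Fin k) ℂ).det := by
    rw [Matrix.SpecialLinearGroup.det_coe]
    exact isUnit_one
  rw [hg i hi, rank_mul_eq_left_of_isUnit_det _ _ (hdet _ _),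
    rank_mul_eq_right_of_isUnit_det _ _ (hdet _ _)]

theorem update_mem_slOrbit {j : ℕ} (hj : j < m)
    (g : Matrix.SpecialLinearGroup (Fin (dims (j+1))) ℂ) :
    Function.update
        (Function.update α j ((↑g : Matrix (Fin (dims (j+1))) (Fin (dims (j+1))) ℂ) * α j)) (j+1)
        (α (j+1) * (↑g⁻¹ : Matrix (Fin (dims (j+1))) (Fin (dims (j+1))) ℂ)) ∈ slOrbit m α := by
  refine ⟨Function.update 1 (j+1) g, by rw [Function.update_of_ne (by omega)]; rfl,
    fun i hi => ?_, fun i hi => by simp [show i ≠ j by omega, show i ≠ j + 1 by omega]⟩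
  rcases eq_or_ne i j with rfl | hij
  · simp
  rcases eq_or_ne i (j+1) with rfl | hij'
  · simp
  · simp [hij, hij']

theorem rank_scalingMatrix_mul_eq_of_isClosed_slOrbit (hclosed : IsClosed (slOrbit m α))
    {j : ℕ} (hj : j < m) {ι : Type*} [Fintype ι] [DecidableEq ι]
    (b : Basis ι ℂ (Fin (dims (j+1)) → ℂ)) (w : ι → ℤ) (hw : ∑ i, w i = 0)
    (hαj : b.scalingMatrix (fun i => if w i < 0 then 1 else 0) * α j = 0)
    (hαj' : α (j+1) * b.scalingMatrix (fun i => if 0 < w i then 1 else 0) = 0) :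
    (b.scalingMatrix (fun i => if w i = 0 then 1 else 0) * α j).rank = (α j).rank ∧
      (α (j+1) * b.scalingMatrix (fun i => if w i = 0 then 1 else 0)).rank = (α (j+1)).rank := by
  have hαj'' : α (j+1) * b.scalingMatrix (fun i => if (-w) i < 0 then 1 else 0) = 0 := by
    simpa using hαj'
  have hlim := ((tendsto_const_nhds (x := α)).update j
    (b.tendsto_scalingMatrix_zpow_mul w hαj)).update (j+1)
    (b.tendsto_mul_scalingMatrix_zpow (-w) hαj'')
  simp only [Pi.neg_apply, neg_eq_zero] at hlim
  have hmem := hclosed.mem_of_tendsto hlim <| by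
    filter_upwards [self_mem_nhdsWithin] with t ht
    obtain ⟨g, hg, hginv⟩ := b.exists_specialLinearGroup_scalingMatrix_zpow w hw ht
    rw [← hg, ← hginv]
    exact update_mem_slOrbit hj g
  constructor
  · simpa using rank_eq_of_mem_slOrbit hmem hj.le
  · simpa using rank_eq_of_mem_slOrbit hmem hj

theorem exists_rank_eq_of_isClosed_slOrbit_of_isInternal (hclosed : IsClosed (slOrbit m α))
    {j : ℕ} (hj : j < m) {N : Fin 3 → Submodule ℂ (Fin (dims (j+1)) → ℂ)}
    (hN : DirectSum.IsInternal N) (hN0 : 0 < finrank ℂ (N 0)) (hN2 : 0 < finrank ℂ (N 2))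
    (hαN : LinearMap.range (α j).mulVecLin ≤ N 0 ⊔ N 1)
    (hαN' : N 0 ≤ LinearMap.ker (α (j+1)).mulVecLin) :
    ∃ Q : Matrix (Fin (dims (j+1))) (Fin (dims (j+1))) ℂ,
      (Q * α j).rank = (α j).rank ∧ (α (j+1) * Q).rank = (α (j+1)).rank ∧
      N 0 ≤ LinearMap.ker Q.mulVecLin ∧ LinearMap.range Q.mulVecLin ≤ N 1 := by
  set v := fun k => Module.finBasis ℂ (N k)
  set wt : Fin 3 → ℤ := ![finrank ℂ (N 2), 0, -finrank ℂ (N 0)]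
  have hw : ∑ i : Σ k, Fin (finrank ℂ (N k)), wt i.1 = 0 := by
    simp [wt, Fintype.sum_sigma, Fin.sum_univ_three, mul_comm]
  have hneg : (hN.collectedBasis v).scalingMatrix (fun i => if wt i.1 < 0 then 1 else 0) * α j
      = 0 := by
    refine Matrix.mul_eq_zero_of_range_le_ker (hαN.trans (sup_le ?_ ?_))
    · exact hN.le_ker_collectedBasis_scalingMatrix v (c := fun k => if wt k < 0 then 1 else 0)
        (k := 0) (by simp [wt, (Int.natCast_nonneg (finrank ℂ (N 2))).not_gt])
    · exact hN.le_ker_collectedBasis_scalingMatrix v (c := fun k => if wt k < 0 then 1 else 0)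
        (k := 1) (by simp [wt])
  have hpos : α (j+1) * (hN.collectedBasis v).scalingMatrix (fun i => if 0 < wt i.1 then 1 else 0)
      = 0 := by
    refine Matrix.mul_eq_zero_of_range_le_ker (le_trans ?_ hαN')
    refine hN.range_collectedBasis_scalingMatrix_le v (fun k => if 0 < wt k then 1 else 0)
      fun k hk => ?_
    fin_cases k
    · exact le_rfl
    · simp [wt] at hk
    · simp [wt] at hk
  obtain ⟨hrank, hrank'⟩ := rank_scalingMatrix_mul_eq_of_isClosed_slOrbit hclosed hj
    (hN.collectedBasis v) (fun i => wt i.1) hw hneg hpos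
  refine ⟨_, hrank, hrank', hN.le_ker_collectedBasis_scalingMatrix v
    (c := fun k => if wt k = 0 then 1 else 0) (k := 0) (by simp [wt, hN2.ne']),
    hN.range_collectedBasis_scalingMatrix_le v (fun k => if wt k = 0 then 1 else 0)
      fun k hk => ?_⟩
  fin_cases k
  · simp [wt, hN2.ne'] at hk
  · exact le_rfl
  · simp [wt, hN0.ne'] at hk

theorem exists_rank_eq_of_isClosed_slOrbit (hclosed : IsClosed (slOrbit m α)) {j : ℕ}
    (hj : j < m) {U W : Submodule ℂ (Fin (dims (j+1)) → ℂ)} (hUW : U ≤ W) (hU : U ≠ ⊥)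
    (hW : W ≠ ⊤) (hαW : LinearMap.range (α j).mulVecLin ≤ W)
    (hαU : U ≤ LinearMap.ker (α (j+1)).mulVecLin) :
    ∃ Q : Matrix (Fin (dims (j+1))) (Fin (dims (j+1))) ℂ,
      (Q * α j).rank = (α j).rank ∧ (α (j+1) * Q).rank = (α (j+1)).rank ∧
      U ≤ LinearMap.ker Q.mulVecLin ∧ Q.rank + finrank ℂ U ≤ finrank ℂ W := by
  obtain ⟨N, hN, rfl, rfl⟩ := Submodule.exists_isInternal_fin_three hUW
  have hN0 : 0 < finrank ℂ (N 0) :=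
    Nat.pos_of_ne_zero fun h => hU (Submodule.finrank_eq_zero.mp h)
  have hN2 : 0 < finrank ℂ (N 2) := by
    refine Nat.pos_of_ne_zero fun h => hW ?_
    simpa [Submodule.finrank_eq_zero.mp h] using hN.submodule_iSup_eq_top
  obtain ⟨Q, hQα, hαQ, hker, hrange⟩ :=
    exists_rank_eq_of_isClosed_slOrbit_of_isInternal hclosed hj hN hN0 hN2 hαW hαU
  refine ⟨Q, hQα, hαQ, hker, ?_⟩
  have hdim := Submodule.finrank_sup_add_finrank_inf_eq (N 0) (N 1)
  rw [(hN.submodule_iSupIndep.pairwiseDisjoint (by decide : (0 : Fin 3) ≠ 1)).eq_bot,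
    finrank_bot] at hdim
  have : Q.rank ≤ finrank ℂ (N 1) := Submodule.finrank_mono hrange
  omega

theorem disjoint_range_ker_of_isClosed_slOrbit (hclosed : IsClosed (slOrbit m α)) {j : ℕ}
    (hj : j < m) (hsurj : ¬ Function.Surjective (α j).mulVecLin) :
    Disjoint (LinearMap.range (α j).mulVecLin) (LinearMap.ker (α (j+1)).mulVecLin) := by
  by_contra h
  obtain ⟨Q, hQα, -, hQ, -⟩ := exists_rank_eq_of_isClosed_slOrbit hclosed hj inf_le_left
    (disjoint_iff.not.mp h) (by rwa [ne_eq, LinearMap.range_eq_top]) le_rfl inf_le_right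
  refine (Matrix.rank_mul_lt_of_not_disjoint fun hd => h ?_).ne hQα
  exact disjoint_iff_inf_le.mpr ((le_inf inf_le_left hQ).trans hd.le_bot)

theorem codisjoint_range_ker_of_isClosed_slOrbit (hclosed : IsClosed (slOrbit m α)) {j : ℕ}
    (hj : j < m) (hinj : ¬ Function.Injective (α (j+1)).mulVecLin) :
    Codisjoint (LinearMap.range (α j).mulVecLin) (LinearMap.ker (α (j+1)).mulVecLin) := by
  by_contra h
  obtain ⟨Q, -, hαQ, -, hQ⟩ := exists_rank_eq_of_isClosed_slOrbit hclosed hj le_sup_right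
    (by rwa [ne_eq, LinearMap.ker_eq_bot]) (codisjoint_iff.not.mp h) le_sup_left le_rfl
  have := Matrix.rank_mul_le_right (α (j+1)) Q
  have := Submodule.finrank_lt (codisjoint_iff.not.mp h)
  have := LinearMap.finrank_range_add_finrank_ker (α (j+1)).mulVecLin
  unfold Matrix.rank at *
  omega

end QuiverOrbit

/- The paper's `r` is `m + 1` and its `V_i` is `ℂ^(dims i)`; the alternatives are stated at
`i = j + 1`. -/
theorem statement2_general (m : ℕ) (dims : ℕ → ℕ)
    (α : ∀ i : ℕ, Matrix (Fin (dims (i+1))) (Fin (dims i)) ℂ)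
    (hclosed : IsClosed {A : ∀ i : ℕ, Matrix (Fin (dims (i+1))) (Fin (dims i)) ℂ |
        ∃ g : ∀ i : ℕ, Matrix.SpecialLinearGroup (Fin (dims i)) ℂ,
          g (m+1) = 1 ∧
          (∀ i ≤ m, A i = (↑(g (i+1)) : Matrix (Fin (dims (i+1))) (Fin (dims (i+1))) ℂ) *
              α i * (↑((g i)⁻¹) : Matrix (Fin (dims i)) (Fin (dims i)) ℂ)) ∧
          (∀ i, m + 1 ≤ i → A i = α i)}) :
    ∀ j < m,
      Function.Injective (α (j+1)).mulVecLin ∨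
      IsCompl (LinearMap.range (α j).mulVecLin) (LinearMap.ker (α (j+1)).mulVecLin) ∨
      Function.Surjective (α j).mulVecLin := by
  intro j hj
  by_cases hinj : Function.Injective (α (j+1)).mulVecLin
  · exact Or.inl hinj
  by_cases hsurj : Function.Surjective (α j).mulVecLin
  · exact Or.inr (Or.inr hsurj)
  exact Or.inr (Or.inl ⟨disjoint_range_ker_of_isClosed_slOrbit hclosed hj hsurj,
    codisjoint_range_ker_of_isClosed_slOrbit hclosed hj hinj⟩)

/-- (Here the paper's `r` is `m + 1`, so `r ≥ 2` is `1 ≤ m`;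
the vector spaces are `V_i = ℂ^(dims i)` with `dims 0 = 0` and
`V_r = ℂ^(dims (m+1)) = ℂ^n`, and the maps of the symplectic quiver are
`α i : ℂ^(dims i) → ℂ^(dims (i+1))` for `i = 0, …, m`, where `α 0 = 0`
automatically since `dims 0 = 0`.  The group `SL = ∏_{i=1}^{r-1} SL(n_i, ℂ)`
acts by `α_i ↦ g_{i+1} α_i g_i⁻¹` with `g_r = 1`.)

If the `SL`-orbit of `α` is closed in the product matrix space, then for each
`i = 1, …, r−1` (written `i = j+1` with `j < m`) at least one of the following
holds: `α_i` is injective, or `ℂ^(dims i)` is the internal direct sum of the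
range of `α_{i−1}` and the kernel of `α_i`, or `α_{i−1}` is surjective. -/
theorem statement2 (m : ℕ) (hm : 1 ≤ m) (dims : ℕ → ℕ) (h0 : dims 0 = 0)
    (hmono : ∀ i ≤ m, dims i ≤ dims (i+1))
    (α : ∀ i : ℕ, Matrix (Fin (dims (i+1))) (Fin (dims i)) ℂ)
    (hclosed : IsClosed {A : ∀ i : ℕ, Matrix (Fin (dims (i+1))) (Fin (dims i)) ℂ |
        ∃ g : ∀ i : ℕ, Matrix.SpecialLinearGroup (Fin (dims i)) ℂ,
          g (m+1) = 1 ∧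
          (∀ i ≤ m, A i = (↑(g (i+1)) : Matrix (Fin (dims (i+1))) (Fin (dims (i+1))) ℂ) *
              α i * (↑((g i)⁻¹) : Matrix (Fin (dims i)) (Fin (dims i)) ℂ)) ∧
          (∀ i, m + 1 ≤ i → A i = α i)}) :
    ∀ j < m,
      Function.Injective (α (j+1)).mulVecLin ∨
      IsCompl (LinearMap.range (α j).mulVecLin) (LinearMap.ker (α (j+1)).mulVecLin) ∨
      Function.Surjective (α j).mulVecLin :=
  statement2_general m dims α hclosed
end

section
/- Fix integers r ≥ 2 and 0 = n_0 ≤ n_1 ≤ … ≤ n_r = n, and a quiver (α, β) satisfying the complex moment map equations at level (λ_1,…,λ_{r−1}) ∈ ℂ^{r−1}. For 1 ≤ k ≤ r−1 define X_k = α_{r−1} α_{r−2} ⋯ α_{r−k} β_{r−k} ⋯ β_{r−2} β_{r−1} (an n×n complex matrix), set X = X_1, and set X_r = 0. Then for each 1 ≤ k ≤ r−1 one has X_k X = X_{k+1} − (λ_{r−1} + λ_{r−2} + ⋯ + λ_{r−k}) X_k; equivalently, X_k (X + ν_{r−k} I) = X_{k+1}, where ν_i = λ_i + λ_{i+1} +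 ⋯ + λ_{r−1}. -/
/-!
Writing `X = A_m B_m = α_m β_m`, the moment map equation
`β_{i+1} α_{i+1} = α_i β_i - λ_{i+1}` lets one pull `X` leftwards through the chain of `β`s:
by downward induction on `i`,
`B_{i+1} X = α_i β_i B_{i+1} - (λ_{i+1} + ⋯ + λ_m) B_{i+1}`.
Multiplying on the left by `A_{i+1}` gives the claim, since `A_{i+1} α_i = A_i` and
`β_i B_{i+1} = B_i`.
-/

open Finset

namespace QuiverChain

variable {R : Type*} [CommRing R] {ι : ℕ → Type*} [∀ i, Fintype (ι i)] [∀ i, DecidableEq (ι i)]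
  {m : ℕ} {α : ∀ i, Matrix (ι (i+1)) (ι i) R} {β : ∀ i, Matrix (ι i) (ι (i+1)) R}
  {lam : ℕ → R} {A : ∀ i, Matrix (ι (m+1)) (ι i) R} {B : ∀ i, Matrix (ι i) (ι (m+1)) R}

theorem B_succ_mul_AB
    (hmoment : ∀ j < m, α j * β j - β (j+1) * α (j+1) = lam (j+1) • (1 : Matrix _ _ R))
    (hA1 : A (m+1) = 1) (hB1 : B (m+1) = 1)
    (hA : ∀ i ≤ m, A i = A (i+1) * α i) (hB : ∀ i ≤ m, B i = β i * B (i+1))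
    {i : ℕ} (hi : i ≤ m) :
    B (i+1) * (A m * B m) = α i * β i * B (i+1) - (∑ j ∈ Icc (i+1) m, lam j) • B (i+1) := by
  induction hi using Nat.decreasingInduction with
  | self =>
    rw [hA m le_rfl, hB m le_rfl, hA1, hB1, Icc_eq_empty (by omega)]
    simp
  | of_succ i hi ih =>
    have hβα : β (i+1) * α (i+1) = α i * β i - lam (i+1) • 1 :=
      eq_sub_of_add_eq (sub_eq_iff_eq_add'.mp (hmoment i hi)).symm
    have hsum : ∑ j ∈ Icc (i+1) m, lam j = lam (i+1) + ∑ j ∈ Icc (i+1+1) m, lam j := by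
      rw [← insert_Icc_add_one_left_eq_Icc (by omega), sum_insert (by simp)]
    calc B (i+1) * (A m * B m)
        = β (i+1) * (B (i+1+1) * (A m * B m)) := by rw [hB (i+1) hi, Matrix.mul_assoc]
      _ = β (i+1) * α (i+1) * (β (i+1) * B (i+1+1))
            - (∑ j ∈ Icc (i+1+1) m, lam j) • (β (i+1) * B (i+1+1)) := by
          rw [ih, Matrix.mul_sub, Matrix.mul_smul]
          simp only [Matrix.mul_assoc]
      _ = α i * β i * B (i+1) - (∑ j ∈ Icc (i+1) m, lam j) • B (i+1) := by
          rw [hβα, ← hB (i+1) hi, hsum, Matrix.sub_mul, Matrix.smul_mul, Matrix.one_mul, add_smul]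
          abel

theorem AB_succ_mul_AB
    (hmoment : ∀ j < m, α j * β j - β (j+1) * α (j+1) = lam (j+1) • (1 : Matrix _ _ R))
    (hA1 : A (m+1) = 1) (hB1 : B (m+1) = 1)
    (hA : ∀ i ≤ m, A i = A (i+1) * α i) (hB : ∀ i ≤ m, B i = β i * B (i+1))
    {i : ℕ} (hi : i ≤ m) :
    A (i+1) * B (i+1) * (A m * B m) =
      A i * B i - (∑ j ∈ Icc (i+1) m, lam j) • (A (i+1) * B (i+1)) := by
  rw [Matrix.mul_assoc, B_succ_mul_AB hmoment hA1 hB1 hA hB hi, Matrix.mul_sub, Matrix.mul_smul,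
    hA i hi, hB i hi]
  simp only [Matrix.mul_assoc]

end QuiverChain

/-- The paper's `r` is `m + 1`. The partial products `A i = α_m ⋯ α_i` and `B i = β_i ⋯ β_m`
are given by their recurrences, so that `X_k = A (m+1-k) * B (m+1-k)`, `X = A m * B m`, and
`X_r = A 0 * B 0`. -/
theorem statement4_general (m : ℕ) (dims : ℕ → ℕ)
    (α : ∀ i : ℕ, Matrix (Fin (dims (i+1))) (Fin (dims i)) ℂ)
    (β : ∀ i : ℕ, Matrix (Fin (dims i)) (Fin (dims (i+1))) ℂ)
    (lam : ℕ → ℂ)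
    (hmm : ∀ j < m, α j * β j - β (j+1) * α (j+1) =
      lam (j+1) • (1 : Matrix (Fin (dims (j+1))) (Fin (dims (j+1))) ℂ))
    (A : ∀ i : ℕ, Matrix (Fin (dims (m+1))) (Fin (dims i)) ℂ)
    (B : ∀ i : ℕ, Matrix (Fin (dims i)) (Fin (dims (m+1))) ℂ)
    (hA1 : A (m+1) = 1) (hB1 : B (m+1) = 1)
    (hA : ∀ i ≤ m, A i = A (i+1) * α i)
    (hB : ∀ i ≤ m, B i = β i * B (i+1)) :
    ∀ k, 1 ≤ k → k ≤ m →
      (A (m+1-k) * B (m+1-k)) * (A m * B m) =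
        A (m-k) * B (m-k) -
          (∑ j ∈ Finset.Icc (m+1-k) m, lam j) • (A (m+1-k) * B (m+1-k)) := by
  intro k hk1 hkm
  rw [show m + 1 - k = m - k + 1 by omega]
  exact QuiverChain.AB_succ_mul_AB (ι := fun i => Fin (dims i)) hmm hA1 hB1 hA hB (Nat.sub_le m k)

/-- (Here the paper's `r` is `m + 1`, so `r ≥ 2` is `1 ≤ m`;
the quiver maps are `α i : ℂ^(dims i) → ℂ^(dims (i+1))` and
`β i : ℂ^(dims (i+1)) → ℂ^(dims i)` for `i = 0, …, m`, with `dims 0 = 0` so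
that `α 0 = β 0 = 0` automatically.  The complex moment map equations at level
`(λ_1, …, λ_m)` read `α_{i−1} β_{i−1} − β_i α_i = λ_i I` for `i = j+1`,
`j < m`.  The partial products `A i = α_m α_{m-1} ⋯ α_i` and
`B i = β_i ⋯ β_{m-1} β_m` are encoded by their defining recurrences, so that
`X_k = A (m+1−k) * B (m+1−k)` for `1 ≤ k ≤ m`, `X = X_1 = A m * B m`, and
`X_r = A 0 * B 0 = 0` since `dims 0 = 0`.)

For each `1 ≤ k ≤ m` one has
`X_k X = X_{k+1} − (λ_m + λ_{m-1} + ⋯ + λ_{m+1−k}) X_k`. -/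
theorem statement4 (m : ℕ) (hm : 1 ≤ m) (dims : ℕ → ℕ) (h0 : dims 0 = 0)
    (hmono : ∀ i ≤ m, dims i ≤ dims (i+1))
    (α : ∀ i : ℕ, Matrix (Fin (dims (i+1))) (Fin (dims i)) ℂ)
    (β : ∀ i : ℕ, Matrix (Fin (dims i)) (Fin (dims (i+1))) ℂ)
    (lam : ℕ → ℂ)
    (hmm : ∀ j < m, α j * β j - β (j+1) * α (j+1) =
      lam (j+1) • (1 : Matrix (Fin (dims (j+1))) (Fin (dims (j+1))) ℂ))
    (A : ∀ i : ℕ, Matrix (Fin (dims (m+1))) (Fin (dims i)) ℂ)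
    (B : ∀ i : ℕ, Matrix (Fin (dims i)) (Fin (dims (m+1))) ℂ)
    (hA1 : A (m+1) = 1) (hB1 : B (m+1) = 1)
    (hA : ∀ i ≤ m, A i = A (i+1) * α i)
    (hB : ∀ i ≤ m, B i = β i * B (i+1)) :
    ∀ k, 1 ≤ k → k ≤ m →
      (A (m+1-k) * B (m+1-k)) * (A m * B m) =
        A (m-k) * B (m-k) -
          (∑ j ∈ Finset.Icc (m+1-k) m, lam j) • (A (m+1-k) * B (m+1-k)) :=
  statement4_general m dims α β lam hmm A B hA1 hB1 hA hB
end

section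
/- Fix integers r ≥ 1 and 0 = n_0 ≤ n_1 ≤ … ≤ n_r = n, and a quiver (α, β) satisfying the complex moment map equations at level (λ_1,…,λ_{r−1}) ∈ ℂ^{r−1}. Let X = α_{r−1}β_{r−1} and ν_i = λ_i + λ_{i+1} + ⋯ + λ_{r−1}. Then X (X + ν_{r−1} I)(X + ν_{r−2} I) ⋯ (X + ν_1 I) = 0. In particular, if λ_i = 0 for all i, then X^r = 0, i.e., X is nilpotent. -/
/-!
Write `X_j = α_j β_j` and `Y_j = β_j α_j`. A polynomial identity `X_j p(X_j) = α_j p(Y_j) β_j`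
moves a polynomial across the `j`-th arrow, and the moment map equation says
`Y_j + λ_j = X_{j-1}`. Hence if `q_{j-1}` annihilates `X_{j-1}`, then `X · q_{j-1}(X + λ_j)`
annihilates `X_j`; starting from `X_0 = 0` (as `n_0 = 0`), this recursion produces exactly
the polynomial `X (X + ν_j)(X + ν_{j-1}) ⋯ (X + ν_1)` of level `j`.
-/

open Polynomial Finset

namespace Matrix

variable {R : Type*} [CommRing R] {m n : Type*} [Fintype m] [Fintype n]
  [DecidableEq m] [DecidableEq n]

theorem mul_aeval_mul_comm (A : Matrix m n R) (B : Matrix n m R) (p : R[X]) :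
    A * aeval (B * A) p = aeval (A * B) p * A := by
  induction p using Polynomial.induction_on with
  | C a => simp [Algebra.algebraMap_eq_smul_one]
  | add p q hp hq => simp only [map_add, Matrix.mul_add, Matrix.add_mul, hp, hq]
  | monomial k a ih =>
    rw [pow_succ, ← mul_assoc, map_mul (aeval (B * A)) _ X, map_mul (aeval (A * B)) _ X,
      aeval_X, aeval_X, ← Matrix.mul_assoc, ih, Matrix.mul_assoc, Matrix.mul_assoc,
      Matrix.mul_assoc]

theorem aeval_mul_X_mul (A : Matrix m n R) (B : Matrix n m R) (p : R[X]) :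
    aeval (A * B) (X * p) = A * aeval (B * A) p * B := by
  rw [mul_comm, aeval_mul, aeval_X, mul_aeval_mul_comm, Matrix.mul_assoc]

end Matrix

variable {R : Type*} [CommRing R]

/-- Factor `i` of the product is `X + ν_{j-i}`, where `ν_k = λ_k + ⋯ + λ_j` at level `j`. -/
noncomputable def quiverAnnihilator (lam : ℕ → R) (j : ℕ) : R[X] :=
  X * ∏ i ∈ range j, (X + C (∑ t ∈ Icc (j - i) j, lam t))

theorem quiverAnnihilator_succ (lam : ℕ → R) (j : ℕ) :
    quiverAnnihilator lam (j + 1) = X * (quiverAnnihilator lam j).comp (X + C (lam (j + 1))) := by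
  have hν : ∀ i ∈ range j, ∑ t ∈ Icc (j + 1 - (i + 1)) (j + 1), lam t =
      ∑ t ∈ Icc (j - i) j, lam t + lam (j + 1) := fun i _ => by
    rw [Nat.add_sub_add_right, sum_Icc_succ_top (by omega)]
  rw [quiverAnnihilator, quiverAnnihilator, prod_range_succ', prod_congr rfl fun i hi => by
    rw [hν i hi], mul_comp, X_comp, Polynomial.prod_comp]
  simp only [add_comp, X_comp, C_comp, C_add, Nat.sub_zero, Icc_self, sum_singleton,
    add_assoc, add_comm (C (lam (j + 1))), mul_comm (∏ _ ∈ _, _)]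

theorem aeval_quiverAnnihilator {A : Type*} [Ring A] [Algebra R A] (lam : ℕ → R) (a : A)
    (j : ℕ) :
    aeval a (quiverAnnihilator lam j) =
      a * (List.ofFn fun i : Fin j =>
        a + (∑ t ∈ Icc (j - (i : ℕ)) j, lam t) • (1 : A)).prod := by
  rw [quiverAnnihilator, ← Fin.prod_univ_eq_prod_range, ← List.prod_ofFn, aeval_mul, aeval_X,
    map_list_prod, List.map_ofFn]
  simp only [Function.comp_def, map_add, aeval_X, aeval_C, Algebra.algebraMap_eq_smul_one]

theorem quiverAnnihilator_eq_X_pow (lam : ℕ → R) (j : ℕ)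
    (hlam : ∀ i, 1 ≤ i → i ≤ j → lam i = 0) :
    quiverAnnihilator lam j = X ^ (j + 1) := by
  have hν : ∀ i ∈ range j, ∑ t ∈ Icc (j - i) j, lam t = 0 := fun i hi =>
    sum_eq_zero fun t ht => by
      simp only [mem_range, mem_Icc] at hi ht
      exact hlam t (by omega) ht.2
  rw [quiverAnnihilator, prod_congr rfl fun i hi => by rw [hν i hi], map_zero, add_zero,
    prod_const, card_range, pow_succ']

theorem aeval_quiverAnnihilator_eq_zero (m : ℕ) (dims : ℕ → ℕ) (h0 : dims 0 = 0)
    (α : ∀ i : ℕ, Matrix (Fin (dims (i+1))) (Fin (dims i)) R)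
    (β : ∀ i : ℕ, Matrix (Fin (dims i)) (Fin (dims (i+1))) R) (lam : ℕ → R)
    (hmm : ∀ j < m, α j * β j - β (j+1) * α (j+1) =
      lam (j+1) • (1 : Matrix (Fin (dims (j+1))) (Fin (dims (j+1))) R)) :
    ∀ j ≤ m, aeval (α j * β j) (quiverAnnihilator lam j) = 0
  | 0, _ => by
    have : IsEmpty (Fin (dims 0)) := by rw [h0]; infer_instance
    rw [quiverAnnihilator, Matrix.aeval_mul_X_mul, Subsingleton.elim (β 0) 0, Matrix.mul_zero]
  | j + 1, hj => by
    have hY : β (j + 1) * α (j + 1) + algebraMap R _ (lam (j + 1)) = α j * β j := by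
      rw [Algebra.algebraMap_eq_smul_one, ← hmm j (by omega), add_sub_cancel]
    rw [quiverAnnihilator_succ, Matrix.aeval_mul_X_mul, aeval_comp, map_add, aeval_X, aeval_C, hY,
      aeval_quiverAnnihilator_eq_zero m dims h0 α β lam hmm j (by omega), Matrix.mul_zero,
      Matrix.zero_mul]

theorem statement5_general (m : ℕ) (dims : ℕ → ℕ) (h0 : dims 0 = 0)
    (α : ∀ i : ℕ, Matrix (Fin (dims (i+1))) (Fin (dims i)) ℂ)
    (β : ∀ i : ℕ, Matrix (Fin (dims i)) (Fin (dims (i+1))) ℂ)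
    (lam : ℕ → ℂ)
    (hmm : ∀ j < m, α j * β j - β (j+1) * α (j+1) =
      lam (j+1) • (1 : Matrix (Fin (dims (j+1))) (Fin (dims (j+1))) ℂ)) :
    (α m * β m) *
        (List.ofFn (fun i : Fin m =>
          α m * β m + (∑ t ∈ Finset.Icc (m - (i : ℕ)) m, lam t) •
            (1 : Matrix (Fin (dims (m+1))) (Fin (dims (m+1))) ℂ))).prod = 0 ∧
      ((∀ i, 1 ≤ i → i ≤ m → lam i = 0) → (α m * β m) ^ (m + 1) = 0) := by
  have hX := aeval_quiverAnnihilator_eq_zero m dims h0 α β lam hmm m le_rfl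
  refine ⟨by rwa [aeval_quiverAnnihilator] at hX, fun hlam => ?_⟩
  rwa [quiverAnnihilator_eq_X_pow lam m hlam, aeval_X_pow] at hX

/-- (Here the paper's `r` is `m + 1`, so `r ≥ 1` always
holds; the quiver maps are `α i : ℂ^(dims i) → ℂ^(dims (i+1))` and
`β i : ℂ^(dims (i+1)) → ℂ^(dims i)` for `i = 0, …, m`, with `dims 0 = 0`, and
the complex moment map equations at level `(λ_1, …, λ_m)` are as usual.
`X = α_m β_m` and `ν_i = λ_i + λ_{i+1} + ⋯ + λ_m`.)

Then `X (X + ν_m I)(X + ν_{m-1} I) ⋯ (X + ν_1 I) = 0`.  In particular if all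
`λ_i = 0` then `X^(m+1) = 0`, i.e. `X` is nilpotent. -/
theorem statement5 (m : ℕ) (dims : ℕ → ℕ) (h0 : dims 0 = 0)
    (hmono : ∀ i ≤ m, dims i ≤ dims (i+1))
    (α : ∀ i : ℕ, Matrix (Fin (dims (i+1))) (Fin (dims i)) ℂ)
    (β : ∀ i : ℕ, Matrix (Fin (dims i)) (Fin (dims (i+1))) ℂ)
    (lam : ℕ → ℂ)
    (hmm : ∀ j < m, α j * β j - β (j+1) * α (j+1) =
      lam (j+1) • (1 : Matrix (Fin (dims (j+1))) (Fin (dims (j+1))) ℂ)) :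
    (α m * β m) *
        (List.ofFn (fun i : Fin m =>
          α m * β m + (∑ t ∈ Finset.Icc (m - (i : ℕ)) m, lam t) •
            (1 : Matrix (Fin (dims (m+1))) (Fin (dims (m+1))) ℂ))).prod = 0 ∧
      ((∀ i, 1 ≤ i → i ≤ m → lam i = 0) → (α m * β m) ^ (m + 1) = 0) :=
  statement5_general m dims h0 α β lam hmm
end

section
/- Fix integers r ≥ 2 and 0 = n_0 ≤ n_1 ≤ … ≤ n_r = n, and a quiver (α, β) satisfying the complex moment map equations at level (λ_1,…,λ_{r−1}) ∈ ℂ^{r−1}. Then for every index 1 ≤ i ≤ r−1, every scalar τ ∈ ℂ and every natural number m: β_i maps the subspace ker((α_i β_i − τ I)^m) of ℂ^{n_{i+1}} into the subspace ker((α_{i−1} β_{i−1} − (λ_i + τ) I)^m) of ℂ^{n_i}, and α_i maps ker((α_{i−1} β_{i−1} − (λ_i + τ) I)^m) into ker((α_i β_i − τ I)^m). -/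
/-!
With `S := β_i α_i − τ I`, the moment map equation says `α_{i−1} β_{i−1} − (λ_i + τ) I = S`.
The identities `S β_i = β_i (α_i β_i − τ I)` and `(α_i β_i − τ I) α_i = α_i S` pass to `k`-th powers,
so `β_i` and `α_i` carry the generalised eigenspace levels into each other.
-/

namespace Matrix

variable {R : Type*} [CommRing R] {m n : Type*} [Fintype m] [Fintype n]
  [DecidableEq m] [DecidableEq n]

theorem pow_mul_eq_mul_pow_of_mul_eq_mul {X : Matrix m m R} {Y : Matrix n n R}
    {P : Matrix m n R} (h : X * P = P * Y) (k : ℕ) : X ^ k * P = P * Y ^ k := by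
  induction k with
  | zero => simp
  | succ k ih => rw [pow_succ, pow_succ, Matrix.mul_assoc, h, ← Matrix.mul_assoc, ih,
      Matrix.mul_assoc]

theorem pow_mulVec_mulVec_eq_zero_of_mul_eq_mul {X : Matrix m m R} {Y : Matrix n n R}
    {P : Matrix m n R} (h : X * P = P * Y) {k : ℕ} {v : n → R} (hv : (Y ^ k) *ᵥ v = 0) :
    (X ^ k) *ᵥ (P *ᵥ v) = 0 := by
  rw [mulVec_mulVec, pow_mul_eq_mul_pow_of_mul_eq_mul h, ← mulVec_mulVec, hv, mulVec_zero]

theorem mul_sub_smul_one_mul_left (A : Matrix m n R) (B : Matrix n m R) (τ : R) :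
    (B * A - τ • 1) * B = B * (A * B - τ • 1) := by
  simp only [Matrix.sub_mul, Matrix.mul_sub, Matrix.mul_assoc, Matrix.smul_mul,
    Matrix.mul_smul, Matrix.one_mul, Matrix.mul_one]

theorem mul_sub_smul_one_mul_right (A : Matrix m n R) (B : Matrix n m R) (τ : R) :
    (A * B - τ • 1) * A = A * (B * A - τ • 1) := by
  simp only [Matrix.sub_mul, Matrix.mul_sub, Matrix.mul_assoc, Matrix.smul_mul,
    Matrix.mul_smul, Matrix.one_mul, Matrix.mul_one]

end Matrix

theorem statement6_general (m : ℕ) (dims : ℕ → ℕ)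
    (α : ∀ i : ℕ, Matrix (Fin (dims (i+1))) (Fin (dims i)) ℂ)
    (β : ∀ i : ℕ, Matrix (Fin (dims i)) (Fin (dims (i+1))) ℂ)
    (lam : ℕ → ℂ)
    (hmm : ∀ j < m, α j * β j - β (j+1) * α (j+1) =
      lam (j+1) • (1 : Matrix (Fin (dims (j+1))) (Fin (dims (j+1))) ℂ)) :
    ∀ j < m, ∀ (τ : ℂ) (k : ℕ),
      (∀ v : Fin (dims (j+2)) → ℂ,
        ((α (j+1) * β (j+1) - τ • 1) ^ k).mulVec v = 0 →
        ((α j * β j - (lam (j+1) + τ) • 1) ^ k).mulVec ((β (j+1)).mulVec v) = 0) ∧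
      (∀ w : Fin (dims (j+1)) → ℂ,
        ((α j * β j - (lam (j+1) + τ) • 1) ^ k).mulVec w = 0 →
        ((α (j+1) * β (j+1) - τ • 1) ^ k).mulVec ((α (j+1)).mulVec w) = 0) := by
  intro j hj τ k
  have hS : α j * β j - (lam (j+1) + τ) • 1 = β (j+1) * α (j+1) - τ • 1 := by
    rw [add_smul, ← sub_sub, ← hmm j hj, sub_sub_cancel]
  rw [hS]
  exact ⟨fun v hv => Matrix.pow_mulVec_mulVec_eq_zero_of_mul_eq_mul
      (Matrix.mul_sub_smul_one_mul_left _ _ τ) hv,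
    fun w hw => Matrix.pow_mulVec_mulVec_eq_zero_of_mul_eq_mul
      (Matrix.mul_sub_smul_one_mul_right _ _ τ) hw⟩

/-- (Here the paper's `r` is `m + 1`, so `r ≥ 2` is `1 ≤ m`;
the quiver maps are `α i : ℂ^(dims i) → ℂ^(dims (i+1))` and
`β i : ℂ^(dims (i+1)) → ℂ^(dims i)` for `i = 0, …, m`, with `dims 0 = 0`, and
the paper's index `i ∈ {1, …, r−1}` is written `j + 1` with `j < m`.)

For every `j < m`, every `τ ∈ ℂ` and every `k ∈ ℕ`, the map `β_{j+1}` sends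
`ker ((α_{j+1} β_{j+1} − τ I)^k)` into
`ker ((α_j β_j − (λ_{j+1} + τ) I)^k)`, and `α_{j+1}` sends
`ker ((α_j β_j − (λ_{j+1} + τ) I)^k)` into
`ker ((α_{j+1} β_{j+1} − τ I)^k)`. -/
theorem statement6 (m : ℕ) (hm : 1 ≤ m) (dims : ℕ → ℕ) (h0 : dims 0 = 0)
    (hmono : ∀ i ≤ m, dims i ≤ dims (i+1))
    (α : ∀ i : ℕ, Matrix (Fin (dims (i+1))) (Fin (dims i)) ℂ)
    (β : ∀ i : ℕ, Matrix (Fin (dims i)) (Fin (dims (i+1))) ℂ)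
    (lam : ℕ → ℂ)
    (hmm : ∀ j < m, α j * β j - β (j+1) * α (j+1) =
      lam (j+1) • (1 : Matrix (Fin (dims (j+1))) (Fin (dims (j+1))) ℂ)) :
    ∀ j < m, ∀ (τ : ℂ) (k : ℕ),
      (∀ v : Fin (dims (j+2)) → ℂ,
        ((α (j+1) * β (j+1) - τ • 1) ^ k).mulVec v = 0 →
        ((α j * β j - (lam (j+1) + τ) • 1) ^ k).mulVec ((β (j+1)).mulVec v) = 0) ∧
      (∀ w : Fin (dims (j+1)) → ℂ,
        ((α j * β j - (lam (j+1) + τ) • 1) ^ k).mulVec w = 0 →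
        ((α (j+1) * β (j+1) - τ • 1) ^ k).mulVec ((α (j+1)).mulVec w) = 0) :=
  statement6_general m dims α β lam hmm
end

section
/- Fix integers r ≥ 2 and 0 = n_0 ≤ n_1 ≤ … ≤ n_r = n, and a quiver (α, β) satisfying the complex moment map equations at level (λ_1,…,λ_{r−1}) ∈ ℂ^{r−1}. Let 1 ≤ i ≤ r−1, let τ ∈ ℂ with τ ≠ 0, and let m be a natural number. Then the restriction of β_i is a linear isomorphism from ker((α_i β_i − τ I)^m) ⊆ ℂ^{n_{i+1}} onto ker((α_{i−1} β_{i−1} − (λ_i + τ) I)^m) ⊆ ℂ^{n_i}, and the restriction of α_i is a linear isomorphism in the opposite direction. -/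
private lemma intertwine_pow {p q : ℕ} (M : Matrix (Fin p) (Fin p) ℂ)
    (N : Matrix (Fin q) (Fin q) ℂ) (B : Matrix (Fin p) (Fin q) ℂ)
    (h : M * B = B * N) (k : ℕ) : M ^ k * B = B * N ^ k := by
  induction k with
  | zero => simp
  | succ k ih =>
    rw [pow_succ', Matrix.mul_assoc, ih, ← Matrix.mul_assoc, h,
      Matrix.mul_assoc, ← pow_succ']

private lemma poly_inv {p : ℕ} (M : Matrix (Fin p) (Fin p) ℂ) (τ : ℂ) (hτ : τ ≠ 0) (k : ℕ) :
    ∃ (Q : Matrix (Fin p) (Fin p) ℂ) (c : ℂ),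
      M * Q = Q * M ∧ (M + τ • 1) * Q = 1 - c • M ^ k := by
  induction k with
  | zero => exact ⟨0, 1, by simp, by simp⟩
  | succ k ih =>
    obtain ⟨Q, c, hcomm, h⟩ := ih
    have ht : τ * (c / τ) = c := by field_simp
    refine ⟨Q + (c / τ) • M ^ k, -(c / τ), ?_, ?_⟩
    · rw [mul_add, add_mul, hcomm, mul_smul_comm, smul_mul_assoc,
        ← pow_succ, ← pow_succ']
    · rw [mul_add, h, add_mul, smul_mul_assoc, one_mul, mul_smul_comm,
      smul_smul, ht, ← pow_succ', neg_smul]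
      abel

private lemma key {p q : ℕ} (A : Matrix (Fin q) (Fin p) ℂ) (B : Matrix (Fin p) (Fin q) ℂ)
    (τ : ℂ) (hτ : τ ≠ 0) (k : ℕ) :
    (∀ v ∈ LinearMap.ker (((A * B - τ • 1) ^ k).mulVecLin),
      B.mulVec v = 0 → v = 0) ∧
    Submodule.map B.mulVecLin
        (LinearMap.ker (((A * B - τ • 1) ^ k).mulVecLin)) =
      LinearMap.ker (((B * A - τ • 1) ^ k).mulVecLin) := by
  set N : Matrix (Fin q) (Fin q) ℂ := A * B - τ • 1 with hN
  set M : Matrix (Fin p) (Fin p) ℂ := B * A - τ • 1 with hM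
  have h1 : M * B = B * N := by
    rw [hM, hN, Matrix.sub_mul, Matrix.mul_sub, Matrix.smul_mul, Matrix.mul_smul,
      Matrix.one_mul, Matrix.mul_one, Matrix.mul_assoc]
  have h3 : N * A = A * M := by
    rw [hM, hN, Matrix.sub_mul, Matrix.mul_sub, Matrix.smul_mul, Matrix.mul_smul,
      Matrix.one_mul, Matrix.mul_one, Matrix.mul_assoc]
  constructor
  · intro v hv hBv
    have hNv : N.mulVec v = (-τ) • v := by
      rw [hN, Matrix.sub_mulVec, ← Matrix.mulVec_mulVec, hBv, Matrix.mulVec_zero,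
        Matrix.smul_mulVec, Matrix.one_mulVec, zero_sub, neg_smul]
    have hpow : ∀ j : ℕ, (N ^ j).mulVec v = ((-τ) ^ j) • v := by
      intro j
      induction j with
      | zero => simp
      | succ j ih =>
        rw [pow_succ', ← Matrix.mulVec_mulVec, ih, Matrix.mulVec_smul, hNv,
          smul_smul, ← pow_succ]
    have hv' : (N ^ k).mulVec v = 0 := hv
    have h0 : ((-τ) ^ k) • v = 0 := by rw [← hpow k, hv']
    have hne : ((-τ) ^ k : ℂ) ≠ 0 := pow_ne_zero _ (neg_ne_zero.mpr hτ)
    exact (smul_eq_zero.mp h0).resolve_left hne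
  · apply le_antisymm
    · rintro w ⟨v, hv, rfl⟩
      have hv' : (N ^ k).mulVec v = 0 := hv
      show (M ^ k).mulVec (B.mulVec v) = 0
      rw [Matrix.mulVec_mulVec, intertwine_pow M N B h1, ← Matrix.mulVec_mulVec, hv',
        Matrix.mulVec_zero]
    · intro w hw
      have hw' : (M ^ k).mulVec w = 0 := hw
      obtain ⟨Q, c, hcomm, hQ⟩ := poly_inv M τ hτ k
      have hcommk : M ^ k * Q = Q * M ^ k := intertwine_pow M M Q hcomm k
      have hBA : B * A = M + τ • 1 := by rw [hM]; abel
      refine ⟨(A * Q).mulVec w, ?_, ?_⟩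
      · show (N ^ k).mulVec ((A * Q).mulVec w) = 0
        have h2 : N ^ k * (A * Q) = (A * Q) * M ^ k := by
          rw [← Matrix.mul_assoc, intertwine_pow N M A h3, Matrix.mul_assoc, hcommk,
            ← Matrix.mul_assoc]
        rw [Matrix.mulVec_mulVec, h2, ← Matrix.mulVec_mulVec, hw', Matrix.mulVec_zero]
      · show B.mulVec ((A * Q).mulVec w) = w
        rw [Matrix.mulVec_mulVec, ← Matrix.mul_assoc, hBA, hQ, Matrix.sub_mulVec,
          Matrix.one_mulVec, Matrix.smul_mulVec, hw', smul_zero, sub_zero]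


/-- (Here the paper's `r` is `m + 1`, so `r ≥ 2` is `1 ≤ m`;
the quiver maps are `α i : ℂ^(dims i) → ℂ^(dims (i+1))` and
`β i : ℂ^(dims (i+1)) → ℂ^(dims i)` for `i = 0, …, m`, with `dims 0 = 0`, and
the paper's index `i ∈ {1, …, r−1}` is written `j + 1` with `j < m`.)

For `j < m`, `τ ≠ 0` and `k ∈ ℕ`, the restriction of `β_{j+1}` is a linear
isomorphism from `ker ((α_{j+1} β_{j+1} − τ I)^k)` onto
`ker ((α_j β_j − (λ_{j+1} + τ) I)^k)` (it is injective on the first subspace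
and maps it onto the second), and likewise the restriction of `α_{j+1}` is a
linear isomorphism in the opposite direction. -/
theorem statement7 (m : ℕ) (hm : 1 ≤ m) (dims : ℕ → ℕ) (h0 : dims 0 = 0)
    (hmono : ∀ i ≤ m, dims i ≤ dims (i+1))
    (α : ∀ i : ℕ, Matrix (Fin (dims (i+1))) (Fin (dims i)) ℂ)
    (β : ∀ i : ℕ, Matrix (Fin (dims i)) (Fin (dims (i+1))) ℂ)
    (lam : ℕ → ℂ)
    (hmm : ∀ j < m, α j * β j - β (j+1) * α (j+1) =
      lam (j+1) • (1 : Matrix (Fin (dims (j+1))) (Fin (dims (j+1))) ℂ)) :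
    ∀ j < m, ∀ (τ : ℂ), τ ≠ 0 → ∀ k : ℕ,
      (∀ v ∈ LinearMap.ker (((α (j+1) * β (j+1) - τ • 1) ^ k).mulVecLin),
        (β (j+1)).mulVec v = 0 → v = 0) ∧
      Submodule.map (β (j+1)).mulVecLin
          (LinearMap.ker (((α (j+1) * β (j+1) - τ • 1) ^ k).mulVecLin)) =
        LinearMap.ker (((α j * β j - (lam (j+1) + τ) • 1) ^ k).mulVecLin) ∧
      (∀ w ∈ LinearMap.ker (((α j * β j - (lam (j+1) + τ) • 1) ^ k).mulVecLin),
        (α (j+1)).mulVec w = 0 → w = 0) ∧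
      Submodule.map (α (j+1)).mulVecLin
          (LinearMap.ker (((α j * β j - (lam (j+1) + τ) • 1) ^ k).mulVecLin)) =
        LinearMap.ker (((α (j+1) * β (j+1) - τ • 1) ^ k).mulVecLin) := by
  intro j hj τ hτ k
  have heq : α j * β j - (lam (j+1) + τ) • 1 =
      β (j+1) * α (j+1) - τ • (1 : Matrix (Fin (dims (j+1))) (Fin (dims (j+1))) ℂ) := by
    have h := hmm j hj
    rw [add_smul, ← h]
    abel
  rw [heq]
  exact ⟨(key (α (j+1)) (β (j+1)) τ hτ k).1, (key (α (j+1)) (β (j+1)) τ hτ k).2,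
    (key (β (j+1)) (α (j+1)) τ hτ k).1, (key (β (j+1)) (α (j+1)) τ hτ k).2⟩
end

section
/- Fix integers r ≥ 2 and 0 = n_0 ≤ n_1 ≤ … ≤ n_r = n, and a quiver (α, β) satisfying the complex moment map equations at level (λ_1,…,λ_{r−1}) ∈ ℂ^{r−1}. Then for every index 1 ≤ i ≤ r−1 and every nonzero scalar τ ∈ ℂ: τ is an eigenvalue of α_i β_i (an n_{i+1}×n_{i+1} matrix) if and only if τ + λ_i is an eigenvalue of α_{i−1} β_{i−1} (an n_i×n_i matrix); moreover, for every natural number m, dim ker((α_i β_i − τ I)^m) = dim ker((α_{i−1} β_{i−1} − (λ_i + τ) I)^m), so the corresponding generalised eigenspaces have equal dimensions. -/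
open Module LinearMap

lemma comm_pow {n p : ℕ} (A : Matrix (Fin p) (Fin n) ℂ) (B : Matrix (Fin n) (Fin p) ℂ)
    (τ : ℂ) (k : ℕ) :
    (B * A - τ • 1) ^ k * B = B * (A * B - τ • 1) ^ k := by
  induction k with
  | zero => simp
  | succ k ih =>
      have h1 : (B * A - τ • 1) * B = B * (A * B - τ • 1) := by
        rw [Matrix.sub_mul, Matrix.mul_sub, Matrix.smul_mul, Matrix.mul_smul,
          Matrix.one_mul, Matrix.mul_one, Matrix.mul_assoc]
      calc (B * A - τ • 1) ^ (k+1) * B = (B * A - τ • 1) ^ k * ((B * A - τ • 1) * B) := by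
            rw [pow_succ, Matrix.mul_assoc]
        _ = (B * A - τ • 1) ^ k * B * (A * B - τ • 1) := by rw [h1, Matrix.mul_assoc]
        _ = B * (A * B - τ • 1) ^ (k+1) := by rw [ih, pow_succ, Matrix.mul_assoc]

lemma ker_scal {n p : ℕ} (A : Matrix (Fin p) (Fin n) ℂ) (B : Matrix (Fin n) (Fin p) ℂ)
    {τ : ℂ} (k : ℕ) (x : Fin p → ℂ) (hBx : B.mulVec x = 0) :
    ((A * B - τ • 1) ^ k).mulVec x = (-τ) ^ k • x := by
  induction k with
  | zero => simp
  | succ k ih =>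
      have h1 : (A * B - τ • 1).mulVec x = (-τ) • x := by
        rw [Matrix.sub_mulVec, ← Matrix.mulVec_mulVec, hBx, Matrix.mulVec_zero,
          Matrix.smul_mulVec, Matrix.one_mulVec]
        simp [neg_smul]
      rw [pow_succ, ← Matrix.mulVec_mulVec, h1, Matrix.mulVec_smul, ih,
        pow_succ, smul_smul, mul_comm]

lemma dim_le {n p : ℕ} (A : Matrix (Fin p) (Fin n) ℂ) (B : Matrix (Fin n) (Fin p) ℂ)
    {τ : ℂ} (hτ : τ ≠ 0) (k : ℕ) :
    finrank ℂ (ker (((A * B - τ • 1) ^ k).mulVecLin)) ≤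
      finrank ℂ (ker (((B * A - τ • 1) ^ k).mulVecLin)) := by
  have hmap : ∀ x ∈ ker (((A * B - τ • 1) ^ k).mulVecLin),
      B.mulVecLin x ∈ ker (((B * A - τ • 1) ^ k).mulVecLin) := by
    intro x hx
    simp only [mem_ker, Matrix.mulVecLin_apply] at hx ⊢
    rw [Matrix.mulVec_mulVec, comm_pow, ← Matrix.mulVec_mulVec, hx, Matrix.mulVec_zero]
  let φ := B.mulVecLin.restrict hmap
  have hinj : Function.Injective φ := by
    rw [← LinearMap.ker_eq_bot, eq_bot_iff]
    rintro ⟨x, hx⟩ hφ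
    simp only [mem_ker, LinearMap.restrict_apply, Submodule.mk_eq_zero] at hφ ⊢
    have hBx : B.mulVec x = 0 := congrArg Subtype.val hφ
    have := ker_scal A B (τ := τ) k x hBx
    simp only [mem_ker, Matrix.mulVecLin_apply] at hx
    rw [hx] at this
    have hne : (-τ) ^ k ≠ 0 := pow_ne_zero _ (neg_ne_zero.mpr hτ)
    rw [Submodule.mem_bot, Submodule.mk_eq_zero]
    exact (smul_eq_zero.mp this.symm).resolve_left hne
  exact LinearMap.finrank_le_finrank_of_injective hinj

lemma dim_eq {n p : ℕ} (A : Matrix (Fin p) (Fin n) ℂ) (B : Matrix (Fin n) (Fin p) ℂ)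
    {τ : ℂ} (hτ : τ ≠ 0) (k : ℕ) :
    finrank ℂ (ker (((A * B - τ • 1) ^ k).mulVecLin)) =
      finrank ℂ (ker (((B * A - τ • 1) ^ k).mulVecLin)) :=
  le_antisymm (dim_le A B hτ k) (dim_le B A hτ k)

lemma eig_iff {d : ℕ} (M : Matrix (Fin d) (Fin d) ℂ) (μ : ℂ) :
    Module.End.HasEigenvalue M.mulVecLin μ ↔
      0 < finrank ℂ (ker (((M - μ • 1) ^ 1).mulVecLin)) := by
  have hML : (M - μ • 1).mulVecLin = M.mulVecLin - μ • 1 := by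
    refine LinearMap.ext fun v => ?_
    simp only [Matrix.mulVecLin_apply, LinearMap.sub_apply, LinearMap.smul_apply,
      Module.End.one_apply, Matrix.sub_mulVec, Matrix.smul_mulVec, Matrix.one_mulVec]
  rw [Module.End.hasEigenvalue_iff, Module.End.eigenspace_def, pow_one, hML,
    Module.finrank_pos_iff, ← Submodule.nontrivial_iff_ne_bot]



/-- (Here the paper's `r` is `m + 1`, so `r ≥ 2` is `1 ≤ m`;
the quiver maps are `α i : ℂ^(dims i) → ℂ^(dims (i+1))` and
`β i : ℂ^(dims (i+1)) → ℂ^(dims i)` for `i = 0, …, m`, with `dims 0 = 0`, and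
the paper's index `i ∈ {1, …, r−1}` is written `j + 1` with `j < m`.)

For every `j < m` and every nonzero `τ ∈ ℂ`: `τ` is an eigenvalue of
`α_{j+1} β_{j+1}` if and only if `τ + λ_{j+1}` is an eigenvalue of
`α_j β_j`; moreover for every `k ∈ ℕ` the generalised eigenspace levels
`ker ((α_{j+1} β_{j+1} − τ I)^k)` and
`ker ((α_j β_j − (λ_{j+1} + τ) I)^k)` have equal dimensions. -/
theorem statement8 (m : ℕ) (hm : 1 ≤ m) (dims : ℕ → ℕ) (h0 : dims 0 = 0)
    (hmono : ∀ i ≤ m, dims i ≤ dims (i+1))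
    (α : ∀ i : ℕ, Matrix (Fin (dims (i+1))) (Fin (dims i)) ℂ)
    (β : ∀ i : ℕ, Matrix (Fin (dims i)) (Fin (dims (i+1))) ℂ)
    (lam : ℕ → ℂ)
    (hmm : ∀ j < m, α j * β j - β (j+1) * α (j+1) =
      lam (j+1) • (1 : Matrix (Fin (dims (j+1))) (Fin (dims (j+1))) ℂ)) :
    ∀ j < m, ∀ τ : ℂ, τ ≠ 0 →
      (Module.End.HasEigenvalue (α (j+1) * β (j+1)).mulVecLin τ ↔
        Module.End.HasEigenvalue (α j * β j).mulVecLin (τ + lam (j+1))) ∧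
      (∀ k : ℕ,
        Module.finrank ℂ
            (LinearMap.ker (((α (j+1) * β (j+1) - τ • 1) ^ k).mulVecLin)) =
          Module.finrank ℂ
            (LinearMap.ker (((α j * β j - (lam (j+1) + τ) • 1) ^ k).mulVecLin))) := by
  intro j hj τ hτ
  have key : α j * β j - (lam (j+1) + τ) • (1 : Matrix (Fin (dims (j+1))) (Fin (dims (j+1))) ℂ)
      = β (j+1) * α (j+1) - τ • 1 := by
    have h := hmm j hj
    rw [sub_eq_iff_eq_add] at h
    rw [h, add_smul]
    abel
  have hd : ∀ k : ℕ,
      finrank ℂ (ker (((α (j+1) * β (j+1) - τ • 1) ^ k).mulVecLin)) =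
        finrank ℂ (ker (((α j * β j - (lam (j+1) + τ) • 1) ^ k).mulVecLin)) := by
    intro k
    rw [key]
    exact dim_eq (α (j+1)) (β (j+1)) hτ k
  refine ⟨?_, hd⟩
  rw [eig_iff, eig_iff, hd 1, add_comm τ (lam (j+1))]
end

section
/- Fix a strictly ordered dimension vector 0 < n_1 < n_2 < … < n_r = n (set n_0 = 0), and a quiver (α, β) satisfying the complex moment map equations at level (λ_1,…,λ_{r−1}) ∈ ℂ^{r−1}. Set X = α_{r−1}β_{r−1}, ν_j = λ_j + λ_{j+1} + ⋯ + λ_{r−1} for 1 ≤ j ≤ r−1 and ν_r = 0. Then for each j = 1,…,r, the scalar −ν_j is a root of the characteristic polynomial of X of multiplicity at least n_j − n_{j−1} (i.e., −ν_j is an eigenvalue of X of algebraic multiplicity at least n_j − n_{j−1}). If the scalars −ν_1, …, −ν_r are pairwise distinct, then the algebraic multiplicity of −ν_j equals exactly n_j − n_{j−1} for each j. -/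
/-!
The moment map equation reads `β_{i+1} α_{i+1} = α_i β_i - λ_{i+1}`, so the characteristic
polynomial of `β_{i+1} α_{i+1}` is that of `α_i β_i` shifted by `λ_{i+1}`, while
`charpoly (α_i β_i) = X ^ (n_{i+1} - n_i) * charpoly (β_i α_i)` since `n_i ≤ n_{i+1}`.
Starting from the empty matrix `β_0 α_0`, induction gives
`charpoly (α_m β_m) = ∏_j (X + ν_j) ^ (n_j - n_{j-1})`, and the multiplicity of `-ν_j` is the sum
of the exponents of the factors with `ν_k = ν_j`.
-/

open Polynomial Matrix

theorem Polynomial.rootMultiplicity_prod_X_sub_C_pow {R ι : Type*} [CommRing R] [IsDomain R]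
    [DecidableEq R] (s : Finset ι) (c : ι → R) (d : ι → ℕ) (a : R) :
    rootMultiplicity a (∏ j ∈ s, (X - C (c j)) ^ d j) = ∑ j ∈ s with c j = a, d j := by
  have hne : ∏ j ∈ s, (X - C (c j)) ^ d j ≠ 0 :=
    Finset.prod_ne_zero_iff.mpr fun j _ => pow_ne_zero _ (X_sub_C_ne_zero _)
  rw [← count_roots, roots_prod _ _ hne, Multiset.count_bind, Finset.sum_filter]
  refine Finset.sum_congr rfl fun j _ => ?_
  rw [roots_pow, roots_X_sub_C, Multiset.count_nsmul, Multiset.count_singleton]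
  split_ifs <;> simp_all [eq_comm]

section Quiver

variable (m : ℕ) (dims : ℕ → ℕ)
    (α : ∀ i : ℕ, Matrix (Fin (dims (i+1))) (Fin (dims i)) ℂ)
    (β : ∀ i : ℕ, Matrix (Fin (dims i)) (Fin (dims (i+1))) ℂ)
    (lam : ℕ → ℂ)

theorem charpoly_beta_mul_alpha (h0 : dims 0 = 0) (hmono : ∀ i ≤ m, dims i ≤ dims (i+1))
    (hmm : ∀ j < m, α j * β j - β (j+1) * α (j+1) =
      lam (j+1) • (1 : Matrix (Fin (dims (j+1))) (Fin (dims (j+1))) ℂ)) :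
    ∀ i ≤ m, (β i * α i).charpoly =
      ∏ j ∈ Finset.Icc 1 i, (X - C (-∑ t ∈ Finset.Icc j i, lam t)) ^ (dims j - dims (j-1)) := by
  intro i hi
  induction i with
  | zero =>
    have : IsEmpty (Fin (dims 0)) := by rw [h0]; infer_instance
    simp [charpoly_isEmpty]
  | succ i ih =>
    have hBA : β (i+1) * α (i+1) = α i * β i - scalar _ (lam (i+1)) := by
      rw [scalar_apply, ← smul_one_eq_diagonal, ← hmm i hi]; abel
    rw [hBA, charpoly_sub_scalar, charpoly_mul_comm_of_le _ _ (by simpa using hmono i (by omega)),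
      Fintype.card_fin, Fintype.card_fin, ih (by omega), Finset.prod_Icc_succ_top (by omega),
      Finset.Icc_self, Finset.sum_singleton, mul_comm]
    simp only [mul_comp, pow_comp, prod_comp, sub_comp, X_comp, C_comp, Nat.add_sub_cancel]
    congr 1
    · refine Finset.prod_congr rfl fun j hj => ?_
      rw [Finset.sum_Icc_succ_top (by simp at hj; omega)]
      simp only [map_neg, map_add]
      ring
    · simp

theorem charpoly_alpha_mul_beta (h0 : dims 0 = 0) (hmono : ∀ i ≤ m, dims i ≤ dims (i+1))
    (hmm : ∀ j < m, α j * β j - β (j+1) * α (j+1) =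
      lam (j+1) • (1 : Matrix (Fin (dims (j+1))) (Fin (dims (j+1))) ℂ)) :
    (α m * β m).charpoly =
      ∏ j ∈ Finset.Icc 1 (m+1), (X - C (-∑ t ∈ Finset.Icc j m, lam t)) ^ (dims j - dims (j-1)) := by
  rw [charpoly_mul_comm_of_le _ _ (by simpa using hmono m le_rfl), Fintype.card_fin,
    Fintype.card_fin, charpoly_beta_mul_alpha m dims α β lam h0 hmono hmm m le_rfl,
    Finset.prod_Icc_succ_top (by omega), Finset.Icc_eq_empty_of_lt (Nat.lt_succ_self m), mul_comm]
  simp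

end Quiver

/-- (Here the paper's `r` is `m + 1`; the dimension vector is
strictly ordered: `0 = dims 0 < dims 1 < … < dims (m+1) = n`.  The quiver maps
are `α i : ℂ^(dims i) → ℂ^(dims (i+1))` and `β i : ℂ^(dims (i+1)) → ℂ^(dims i)`
for `i = 0, …, m`, satisfying the complex moment map equations at level
`(λ_1, …, λ_m)`.  Set `X = α_m β_m` and `ν_j = λ_j + λ_{j+1} + ⋯ + λ_m` for
`1 ≤ j ≤ m`, with `ν_{m+1} = 0` (an empty sum).)

Then for each `j = 1, …, m+1`, the scalar `−ν_j` is a root of the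
characteristic polynomial of `X` of multiplicity at least `dims j − dims (j−1)`,
and if `−ν_1, …, −ν_{m+1}` are pairwise distinct then the multiplicity of
`−ν_j` is exactly `dims j − dims (j−1)`. -/
theorem statement9 (m : ℕ) (dims : ℕ → ℕ) (h0 : dims 0 = 0)
    (hmono : ∀ i ≤ m, dims i < dims (i+1))
    (α : ∀ i : ℕ, Matrix (Fin (dims (i+1))) (Fin (dims i)) ℂ)
    (β : ∀ i : ℕ, Matrix (Fin (dims i)) (Fin (dims (i+1))) ℂ)
    (lam : ℕ → ℂ)
    (hmm : ∀ j < m, α j * β j - β (j+1) * α (j+1) =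
      lam (j+1) • (1 : Matrix (Fin (dims (j+1))) (Fin (dims (j+1))) ℂ)) :
    (∀ j, 1 ≤ j → j ≤ m + 1 →
      dims j - dims (j-1) ≤
        Polynomial.rootMultiplicity (-(∑ t ∈ Finset.Icc j m, lam t))
          (Matrix.charpoly (α m * β m))) ∧
    ((∀ j k, 1 ≤ j → j ≤ m + 1 → 1 ≤ k → k ≤ m + 1 →
        (∑ t ∈ Finset.Icc j m, lam t) = (∑ t ∈ Finset.Icc k m, lam t) → j = k) →
      ∀ j, 1 ≤ j → j ≤ m + 1 →
        Polynomial.rootMultiplicity (-(∑ t ∈ Finset.Icc j m, lam t))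
            (Matrix.charpoly (α m * β m)) = dims j - dims (j-1)) := by
  have hmult : ∀ j, rootMultiplicity (-∑ t ∈ Finset.Icc j m, lam t) (α m * β m).charpoly =
      ∑ k ∈ Finset.Icc 1 (m+1) with
        -∑ t ∈ Finset.Icc k m, lam t = -∑ t ∈ Finset.Icc j m, lam t, (dims k - dims (k-1)) := by
    intro j
    rw [charpoly_alpha_mul_beta m dims α β lam h0 (fun i hi => (hmono i hi).le) hmm,
      rootMultiplicity_prod_X_sub_C_pow]
  refine ⟨fun j hj1 hj2 => ?_, fun hdist j hj1 hj2 => ?_⟩ <;>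
    have hj : j ∈ Finset.Icc 1 (m+1) := Finset.mem_Icc.mpr ⟨hj1, hj2⟩
  · rw [hmult]
    exact Finset.single_le_sum (f := fun k => dims k - dims (k-1)) (fun _ _ => Nat.zero_le _)
      (Finset.mem_filter.mpr ⟨hj, rfl⟩)
  · rw [hmult, Finset.sum_eq_single_of_mem j]
    · exact Finset.mem_filter.mpr ⟨hj, rfl⟩
    · intro k hk hkj
      simp only [Finset.mem_filter, Finset.mem_Icc, neg_inj] at hk
      exact absurd (hdist k j hk.1.1 hk.1.2 hj1 hj2 hk.2) hkj
end

section
/- Fix a strictly ordered dimension vector 0 < n_1 < n_2 < … < n_r = n (set n_0 = 0), and a quiver (α, β) satisfying the complex moment map equations at level (λ_1,…,λ_{r−1}) ∈ ℂ^{r−1}, with each α_i injective and each β_i surjective. Set X = α_{r−1}β_{r−1} and ν_i = λ_i + ⋯ + λ_{r−1}. Then no nonzero complex polynomial of degree less than r annihilates X; consequently the minimal polynomial of X is exactly x (x + ν_{r−1})(x + ν_{r−2}) ⋯ (x + ν_1), a monic polynomial of degree r. -/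
open Polynomial Matrix

namespace Statement10Aux

variable {I J : Type*} [Fintype I] [Fintype J] [DecidableEq I] [DecidableEq J]

lemma swap_pow (A : Matrix I J ℂ) (B : Matrix J I ℂ) (k : ℕ) :
    B * (A * B) ^ k = (B * A) ^ k * B := by
  induction k with
  | zero => simp
  | succ k ih =>
    rw [pow_succ', pow_succ', ← Matrix.mul_assoc, ← Matrix.mul_assoc B A B,
      Matrix.mul_assoc (B * A) B, ih, ← Matrix.mul_assoc]

lemma swap_aeval (A : Matrix I J ℂ) (B : Matrix J I ℂ) (p : ℂ[X]) :
    B * aeval (A * B) p = aeval (B * A) p * B := by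
  induction p using Polynomial.induction_on' with
  | add p q hp hq =>
    rw [_root_.map_add, _root_.map_add, Matrix.mul_add, Matrix.add_mul, hp, hq]
  | monomial n a =>
    rw [aeval_monomial, aeval_monomial, Algebra.algebraMap_eq_smul_one,
      Algebra.algebraMap_eq_smul_one, smul_mul_assoc, one_mul, smul_mul_assoc, one_mul,
      Matrix.mul_smul, Matrix.smul_mul, swap_pow]

lemma step_up {n N : ℕ} (A : Matrix (Fin N) (Fin n) ℂ) (B : Matrix (Fin n) (Fin N) ℂ)
    {q : ℂ[X]} (hq : aeval (B * A) q = 0) : aeval (A * B) (X * q) = 0 := by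
  rw [_root_.map_mul, aeval_X, Matrix.mul_assoc, swap_aeval, hq, Matrix.zero_mul,
    Matrix.mul_zero]

lemma exists_ker {n N : ℕ} (h : n < N) (B : Matrix (Fin n) (Fin N) ℂ) :
    ∃ v : Fin N → ℂ, v ≠ 0 ∧ B.mulVec v = 0 := by
  have hni : ¬ Function.Injective B.mulVecLin := by
    intro hinj
    have := LinearMap.finrank_le_finrank_of_injective hinj
    simp [Module.finrank_fin_fun] at this
    omega
  have hker : LinearMap.ker B.mulVecLin ≠ ⊥ :=
    fun hbot => hni (LinearMap.ker_eq_bot.mp hbot)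
  obtain ⟨v, hvmem, hv0⟩ := (Submodule.ne_bot_iff _).mp hker
  exact ⟨v, hv0, by simpa [Matrix.mulVecLin_apply] using LinearMap.mem_ker.mp hvmem⟩

lemma matrix_zero {k : ℕ} (M : Matrix (Fin k) (Fin k) ℂ)
    (h : ∀ v, M.mulVec v = 0) : M = 0 := by
  ext i j
  have := congrFun (h (Pi.single j 1)) i
  simpa using this

lemma step_down {n N : ℕ} (hn : n < N) (A : Matrix (Fin N) (Fin n) ℂ)
    (B : Matrix (Fin n) (Fin N) ℂ)
    (hA : Function.Injective A.mulVecLin) (hB : Function.Surjective B.mulVecLin)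
    {p : ℂ[X]} (hp0 : p ≠ 0) (hp : aeval (A * B) p = 0) :
    p.divX ≠ 0 ∧ p.divX.natDegree < p.natDegree ∧ aeval (B * A) p.divX = 0 := by
  obtain ⟨v, hv0, hv⟩ := exists_ker hn B
  have hsplit : aeval (A * B) p = aeval (A * B) p.divX * (A * B)
      + (p.coeff 0) • (1 : Matrix (Fin N) (Fin N) ℂ) := by
    conv_lhs => rw [← divX_mul_X_add p]
    rw [_root_.map_add, _root_.map_mul, aeval_X, aeval_C, Algebra.algebraMap_eq_smul_one]
  have hp' : aeval (A * B) p.divX * (A * B) + (p.coeff 0) • (1 : Matrix (Fin N) (Fin N) ℂ)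
      = 0 := by rw [← hsplit]; exact hp
  have hc0 : p.coeff 0 = 0 := by
    have h1 := congrArg (fun M => M.mulVec v) hp'
    simp only [Matrix.add_mulVec, ← Matrix.mulVec_mulVec, hv, Matrix.mulVec_zero, zero_add,
      Matrix.smul_mulVec, Matrix.one_mulVec, Matrix.zero_mulVec] at h1
    by_contra hc
    exact hv0 (by simpa [hc, smul_eq_zero] using h1)
  have hpX : p = p.divX * X := by
    conv_lhs => rw [← divX_mul_X_add p, hc0]
    simp
  have hq0 : p.divX ≠ 0 := fun h => hp0 (by rw [hpX, h, zero_mul])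
  have hdeg1 : 1 ≤ p.natDegree := by
    by_contra h
    have h0' : p.natDegree = 0 := by omega
    exact hp0 (by rw [eq_C_of_natDegree_eq_zero h0', hc0, map_zero])
  refine ⟨hq0, by rw [natDegree_divX_eq_natDegree_tsub_one]; omega, ?_⟩
  have h2 : aeval (A * B) p.divX * (A * B) = 0 := by
    have h3 := hp
    rw [hpX, _root_.map_mul, aeval_X] at h3
    exact h3
  have hzero : A * aeval (B * A) p.divX * B = 0 := by
    rw [swap_aeval B A, Matrix.mul_assoc]
    exact h2
  apply matrix_zero
  intro u
  obtain ⟨w, hw⟩ := hB u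
  rw [Matrix.mulVecLin_apply] at hw
  apply hA
  rw [map_zero, Matrix.mulVecLin_apply, ← hw, Matrix.mulVec_mulVec, Matrix.mulVec_mulVec,
    hzero, Matrix.zero_mulVec]

/-- The polynomial built by the upward recursion. -/
noncomputable def shiftProd (lam : ℕ → ℂ) : ℕ → ℂ[X]
  | 0 => X
  | (k+1) => X * (shiftProd lam k).comp (X + C (lam (k+1)))

lemma shiftProd_eq (lam : ℕ → ℂ) (m : ℕ) :
    shiftProd lam m =
      X * ∏ i ∈ Finset.Icc 1 m, (X + C (∑ t ∈ Finset.Icc i m, lam t)) := by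
  induction m with
  | zero => simp [shiftProd]
  | succ m ih =>
    rw [shiftProd, ih, mul_comp, X_comp, prod_comp]
    have hfac : ∀ i ∈ Finset.Icc 1 m,
        (X + C (∑ t ∈ Finset.Icc i m, lam t)).comp (X + C (lam (m+1)))
          = X + C (∑ t ∈ Finset.Icc i (m+1), lam t) := by
      intro i hi
      simp only [Finset.mem_Icc] at hi
      rw [add_comp, X_comp, C_comp, ← Finset.insert_Icc_right_eq_Icc_add_one (by omega),
        Finset.sum_insert (by simp only [Finset.mem_Icc]; omega), _root_.map_add]
      ring
    rw [Finset.prod_congr rfl hfac,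
      ← Finset.insert_Icc_right_eq_Icc_add_one (show 1 ≤ m + 1 by omega),
      Finset.prod_insert (by simp), Finset.Icc_self, Finset.sum_singleton]

end Statement10Aux

open Statement10Aux in
/-- (Here the paper's `r` is `m + 1`; the dimension vector
is strictly ordered: `0 = dims 0 < dims 1 < … < dims (m+1) = n`.  The quiver
maps are `α i : ℂ^(dims i) → ℂ^(dims (i+1))` and
`β i : ℂ^(dims (i+1)) → ℂ^(dims i)` for `i = 0, …, m`, each `α_i` injective
and each `β_i` surjective for `i = 1, …, m`, satisfying the complex moment map
equations at level `(λ_1, …, λ_m)`.  Set `X = α_m β_m` and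
`ν_i = λ_i + ⋯ + λ_m`.)

Then no nonzero polynomial of degree less than `r = m + 1` annihilates `X`,
and the minimal polynomial of `X` is exactly
`x (x + ν_m)(x + ν_{m−1}) ⋯ (x + ν_1)`. -/
theorem statement10 (m : ℕ) (dims : ℕ → ℕ) (h0 : dims 0 = 0)
    (hmono : ∀ i ≤ m, dims i < dims (i+1))
    (α : ∀ i : ℕ, Matrix (Fin (dims (i+1))) (Fin (dims i)) ℂ)
    (β : ∀ i : ℕ, Matrix (Fin (dims i)) (Fin (dims (i+1))) ℂ)
    (lam : ℕ → ℂ)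
    (hmm : ∀ j < m, α j * β j - β (j+1) * α (j+1) =
      lam (j+1) • (1 : Matrix (Fin (dims (j+1))) (Fin (dims (j+1))) ℂ))
    (hinj : ∀ i, 1 ≤ i → i ≤ m → Function.Injective (α i).mulVecLin)
    (hsurj : ∀ i, 1 ≤ i → i ≤ m → Function.Surjective (β i).mulVecLin) :
    (∀ p : Polynomial ℂ, p ≠ 0 → p.natDegree < m + 1 →
      Polynomial.aeval (α m * β m) p ≠ 0) ∧
    minpoly ℂ (α m * β m) =
      Polynomial.X *
        ∏ i ∈ Finset.Icc 1 m,
          (Polynomial.X + Polynomial.C (∑ t ∈ Finset.Icc i m, lam t)) := by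
  -- the moment map equations, rewritten
  have hba : ∀ j < m, β (j+1) * α (j+1) = α j * β j - lam (j+1) • 1 := by
    intro j hj
    have h := hmm j hj
    have h' := sub_eq_iff_eq_add.mp h
    rw [h']
    abel
  -- downward induction: no small polynomial annihilates `α k * β k`
  have hdown : ∀ k, k ≤ m → ∀ p : ℂ[X], p ≠ 0 → p.natDegree ≤ k →
      Polynomial.aeval (α k * β k) p ≠ 0 := by
    intro k
    induction k with
    | zero =>
      intro _ p hp0 hdeg hev
      have hpc : p = C (p.coeff 0) := eq_C_of_natDegree_eq_zero (Nat.le_zero.mp hdeg)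
      rw [hpc, aeval_C, Algebra.algebraMap_eq_smul_one] at hev
      have h1 : 0 < dims 1 := h0 ▸ hmono 0 (Nat.zero_le m)
      have hcc := congrFun (congrFun hev ⟨0, h1⟩) ⟨0, h1⟩
      simp [Matrix.one_apply, Matrix.smul_apply] at hcc
      exact hp0 (by rw [hpc, hcc, map_zero])
    | succ k ih =>
      intro hk p hp0 hdeg hev
      obtain ⟨hq0, hqdeg, hqev⟩ := step_down (hmono (k+1) hk) (α (k+1)) (β (k+1))
        (hinj (k+1) (by omega) hk) (hsurj (k+1) (by omega) hk) hp0 hev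
      rw [hba k (by omega)] at hqev
      refine ih (by omega) (p.divX.comp (X - C (lam (k+1)))) ?_ ?_ ?_
      · intro h
        apply hq0
        have hcomp : (p.divX.comp (X - C (lam (k+1)))).comp (X + C (lam (k+1))) = p.divX := by
          rw [comp_assoc]
          simp
        rw [h, zero_comp] at hcomp
        exact hcomp.symm
      · rw [natDegree_comp, natDegree_X_sub_C, mul_one]; omega
      · rw [aeval_comp, _root_.map_sub, aeval_X, aeval_C, Algebra.algebraMap_eq_smul_one]
        exact hqev
  -- upward induction: `shiftProd lam k` annihilates `α k * β k`
  have hup : ∀ k, k ≤ m → Polynomial.aeval (α k * β k) (shiftProd lam k) = 0 := by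
    intro k
    induction k with
    | zero =>
      intro _
      rw [shiftProd, aeval_X]
      have : IsEmpty (Fin (dims 0)) := by rw [h0]; infer_instance
      ext i j
      simp [Matrix.mul_apply]
    | succ k ih =>
      intro hk
      rw [shiftProd]
      apply step_up
      rw [aeval_comp, _root_.map_add, aeval_X, aeval_C, Algebra.algebraMap_eq_smul_one,
        hba k (by omega), sub_add_cancel]
      exact ih (by omega)
  set P : ℂ[X] := X * ∏ i ∈ Finset.Icc 1 m, (X + C (∑ t ∈ Finset.Icc i m, lam t)) with hP
  have hPev : Polynomial.aeval (α m * β m) P = 0 := by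
    rw [hP, ← shiftProd_eq]; exact hup m le_rfl
  have hPmonic : P.Monic := by
    apply monic_X.mul
    exact monic_prod_of_monic _ _ (fun i _ => monic_X_add_C _)
  have hPdeg : P.natDegree = m + 1 := by
    have hdeg1 : ∀ i ∈ Finset.Icc 1 m,
        (X + C (∑ t ∈ Finset.Icc i m, lam t)).natDegree = 1 :=
      fun i _ => natDegree_X_add_C _
    rw [hP, monic_X.natDegree_mul (monic_prod_of_monic _ _ fun i _ => monic_X_add_C _),
      natDegree_X, natDegree_prod _ _ (fun i _ => (monic_X_add_C _).ne_zero),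
      Finset.sum_congr rfl hdeg1, Finset.sum_const, smul_eq_mul, mul_one, Nat.card_Icc]
    omega
  have hfirst : ∀ p : Polynomial ℂ, p ≠ 0 → p.natDegree < m + 1 →
      Polynomial.aeval (α m * β m) p ≠ 0 :=
    fun p hp0 hdeg => hdown m le_rfl p hp0 (by omega)
  refine ⟨hfirst, ?_⟩
  have hint : IsIntegral ℂ (α m * β m) :=
    ⟨P, hPmonic, by rw [← Polynomial.aeval_def]; exact hPev⟩
  have hdvd : minpoly ℂ (α m * β m) ∣ P := minpoly.dvd ℂ _ hPev
  have hge : m + 1 ≤ (minpoly ℂ (α m * β m)).natDegree := by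
    by_contra h
    exact hfirst _ (minpoly.ne_zero hint) (by omega) (minpoly.aeval ℂ _)
  exact (Polynomial.eq_of_monic_of_dvd_of_natDegree_le (minpoly.monic hint) hPmonic hdvd
    (by rw [hPdeg]; exact hge)).symm
end

section
/- Let n ≥ 1 and let Y be any n×n complex matrix with trace zero. Then there exist an integer r ≥ 1, a strictly ordered dimension vector 0 < n_1 < n_2 < … < n_r = n, scalars λ_1, …, λ_{r−1} ∈ ℂ, and complex matrices α_i of size n_{i+1}×n_i and β_i of size n_i×n_{i+1} for i = 1,…,r−1 with each α_i injective and each β_i surjective, satisfying the complex moment map equations α_{i−1}β_{i−1} − β_i α_i = λ_i I_{n_i} for i = 1,…,r−1 (with α_0 = β_0 = 0), such that the trace-free part of X = α_{r−1}β_{r−1} equals Y, i.e., X − (tr X / n) I = Y. -/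
/-!
Choose an eigenvalue `μ` of `X`. Then `X - μ = A * B` with `A` injective and `B` surjective
through `K^k`, `k = rank (X - μ) < n`. By induction on `n`, `B * A + c` is the top product
`α * β` of a quiver with smaller dimension vector for some scalar `c`; appending the arrows
`A, B` gives the moment map equation `α * β - B * A = c` at the new vertex and the new top
product `A * B = X - μ`. So every matrix is a top product up to a scalar, and taking the
trace-free part removes the scalar.
-/

open Function Matrix Module

namespace Matrix

theorem exists_rank_sub_smul_one_lt {K n : Type*} [Field K] [IsAlgClosed K] [Fintype n]
    [DecidableEq n] [Nonempty n] (X : Matrix n n K) :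
    ∃ μ : K, (X - μ • 1).rank < Fintype.card n := by
  obtain ⟨μ, hμ⟩ := Module.End.exists_eigenvalue X.mulVecLin
  have hlin : (X - μ • 1).mulVecLin = X.mulVecLin - μ • 1 :=
    LinearMap.ext fun v => by simp
  have hrange : LinearMap.range (X - μ • 1).mulVecLin ≠ ⊤ := by
    rwa [Ne, ← LinearMap.ker_eq_bot_iff_range_eq_top, hlin, ← Module.End.eigenspace_def]
  exact ⟨μ, (Submodule.finrank_lt hrange).trans_eq (finrank_fintype_fun_eq_card K)⟩

theorem exists_injective_surjective_mul_eq {K m n : Type*} [Field K] [Fintype m]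
    [Fintype n] [DecidableEq n] (M : Matrix m n K) :
    ∃ (A : Matrix m (Fin M.rank) K) (B : Matrix (Fin M.rank) n K),
      Injective A.mulVecLin ∧ Surjective B.mulVecLin ∧ A * B = M := by
  let e : LinearMap.range M.mulVecLin ≃ₗ[K] (Fin M.rank → K) :=
    (finBasis K (LinearMap.range M.mulVecLin)).equivFun
  let a := (LinearMap.range M.mulVecLin).subtype ∘ₗ e.symm.toLinearMap
  let b := e.toLinearMap ∘ₗ M.mulVecLin.rangeRestrict
  have hab : a ∘ₗ b = M.mulVecLin := LinearMap.ext fun v => by simp [a, b]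
  refine ⟨LinearMap.toMatrix' a, LinearMap.toMatrix' b, ?_, ?_, ?_⟩
  · rw [← Matrix.toLin'_apply', Matrix.toLin'_toMatrix']
    exact Subtype.val_injective.comp e.symm.injective
  · rw [← Matrix.toLin'_apply', Matrix.toLin'_toMatrix']
    exact e.surjective.comp M.mulVecLin.surjective_rangeRestrict
  · rw [← LinearMap.toMatrix'_comp, hab, ← Matrix.toLin'_apply', LinearMap.toMatrix'_toLin']

def castFin {α : Type*} {p p' q q' : ℕ} (hp : p = p') (hq : q = q')
    (M : Matrix (Fin p) (Fin q) α) : Matrix (Fin p') (Fin q') α :=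
  M.submatrix (Fin.cast hp.symm) (Fin.cast hq.symm)

@[simp]
theorem castFin_rfl {α : Type*} {p q : ℕ} (M : Matrix (Fin p) (Fin q) α) :
    castFin rfl rfl M = M := rfl

theorem castFin_castFin {α : Type*} {p p' p'' q q' q'' : ℕ} (hp : p = p') (hp' : p' = p'')
    (hq : q = q') (hq' : q' = q'') (M : Matrix (Fin p) (Fin q) α) :
    castFin hp' hq' (castFin hp hq M) = castFin (hp.trans hp') (hq.trans hq') M := by
  subst hp hp' hq hq'; rfl

theorem castFin_mul_castFin {α : Type*} [Mul α] [AddCommMonoid α] {p p' q q' r r' : ℕ}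
    (hp : p = p') (hq hq' : q = q') (hr : r = r')
    (M : Matrix (Fin p) (Fin q) α) (N : Matrix (Fin q) (Fin r) α) :
    castFin hp hq M * castFin hq' hr N = castFin hp hr (M * N) := by
  subst hp hq hr; rfl

theorem castFin_sub {α : Type*} [Sub α] {p p' q q' : ℕ} (hp : p = p') (hq : q = q')
    (M N : Matrix (Fin p) (Fin q) α) :
    castFin hp hq (M - N) = castFin hp hq M - castFin hp hq N := by
  subst hp hq; rfl

theorem castFin_smul {S α : Type*} [SMul S α] {p p' q q' : ℕ} (hp : p = p') (hq : q = q')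
    (c : S) (M : Matrix (Fin p) (Fin q) α) : castFin hp hq (c • M) = c • castFin hp hq M := by
  subst hp hq; rfl

theorem castFin_one {α : Type*} [Zero α] [One α] {p p' : ℕ} (hp hp' : p = p') :
    castFin hp hp' (1 : Matrix (Fin p) (Fin p) α) = 1 := by
  subst hp; rfl

theorem injective_mulVecLin_castFin_iff {R : Type*} [CommSemiring R] {p p' q q' : ℕ}
    (hp : p = p') (hq : q = q') (M : Matrix (Fin p) (Fin q) R) :
    Injective (castFin hp hq M).mulVecLin ↔ Injective M.mulVecLin := by
  subst hp hq; rfl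

theorem surjective_mulVecLin_castFin_iff {R : Type*} [CommSemiring R] {p p' q q' : ℕ}
    (hp : p = p') (hq : q = q') (M : Matrix (Fin p) (Fin q) R) :
    Surjective (castFin hp hq M).mulVecLin ↔ Surjective M.mulVecLin := by
  subst hp hq; rfl

end Matrix

section Snoc

variable {R : Type*} [Zero R] {dims : ℕ → ℕ} {m n i : ℕ}

def snocDims (dims : ℕ → ℕ) (m n i : ℕ) : ℕ := if i ≤ m + 1 then dims i else n

theorem snocDims_of_le (h : i ≤ m + 1) : snocDims dims m n i = dims i := if_pos h

theorem snocDims_of_lt (h : m + 1 < i) : snocDims dims m n i = n := if_neg (by omega)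

def snocUp (α : ∀ i, Matrix (Fin (dims (i + 1))) (Fin (dims i)) R)
    (A : Matrix (Fin n) (Fin (dims (m + 1))) R) (i : ℕ) :
    Matrix (Fin (snocDims dims m n (i + 1))) (Fin (snocDims dims m n i)) R :=
  if h : i ≤ m then
    castFin (snocDims_of_le (by omega)).symm (snocDims_of_le (by omega)).symm (α i)
  else if h' : i = m + 1 then
    castFin (snocDims_of_lt (by omega)).symm (by rw [h', snocDims_of_le le_rfl]) A
  else 0

def snocDown (β : ∀ i, Matrix (Fin (dims i)) (Fin (dims (i + 1))) R)
    (B : Matrix (Fin (dims (m + 1))) (Fin n) R) (i : ℕ) :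
    Matrix (Fin (snocDims dims m n i)) (Fin (snocDims dims m n (i + 1))) R :=
  if h : i ≤ m then
    castFin (snocDims_of_le (by omega)).symm (snocDims_of_le (by omega)).symm (β i)
  else if h' : i = m + 1 then
    castFin (by rw [h', snocDims_of_le le_rfl]) (snocDims_of_lt (by omega)).symm B
  else 0

variable (α : ∀ i, Matrix (Fin (dims (i + 1))) (Fin (dims i)) R)
  (β : ∀ i, Matrix (Fin (dims i)) (Fin (dims (i + 1))) R)
  (A : Matrix (Fin n) (Fin (dims (m + 1))) R) (B : Matrix (Fin (dims (m + 1))) (Fin n) R)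

theorem snocUp_of_le (h : i ≤ m) :
    snocUp α A i =
      castFin (snocDims_of_le (by omega)).symm (snocDims_of_le (by omega)).symm (α i) :=
  dif_pos h

theorem snocUp_last :
    snocUp α A (m + 1) =
      castFin (snocDims_of_lt (by omega)).symm (snocDims_of_le le_rfl).symm A := by
  rw [snocUp, dif_neg (by omega), dif_pos rfl]

theorem snocDown_of_le (h : i ≤ m) :
    snocDown β B i =
      castFin (snocDims_of_le (by omega)).symm (snocDims_of_le (by omega)).symm (β i) :=
  dif_pos h

theorem snocDown_last :
    snocDown β B (m + 1) =
      castFin (snocDims_of_le le_rfl).symm (snocDims_of_lt (by omega)).symm B := by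
  rw [snocDown, dif_neg (by omega), dif_pos rfl]

end Snoc

section QuiverProduct

variable {R : Type*} [CommRing R]

def IsQuiverProduct (n : ℕ) (X : Matrix (Fin n) (Fin n) R) : Prop :=
  ∃ (m : ℕ) (dims : ℕ → ℕ) (lam : ℕ → R)
    (α : ∀ i : ℕ, Matrix (Fin (dims (i+1))) (Fin (dims i)) R)
    (β : ∀ i : ℕ, Matrix (Fin (dims i)) (Fin (dims (i+1))) R)
    (hc : dims (m+1) = n),
    dims 0 = 0 ∧
    (∀ i ≤ m, dims i < dims (i+1)) ∧
    (∀ i, 1 ≤ i → i ≤ m → Injective (α i).mulVecLin) ∧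
    (∀ i, 1 ≤ i → i ≤ m → Surjective (β i).mulVecLin) ∧
    (∀ j < m, α j * β j - β (j+1) * α (j+1) =
      lam (j+1) • (1 : Matrix (Fin (dims (j+1))) (Fin (dims (j+1))) R)) ∧
    castFin hc hc (α m * β m) = X

theorem isQuiverProduct_zero {n : ℕ} (hn : 0 < n) : IsQuiverProduct n (0 : Matrix _ _ R) :=
  ⟨0, fun i => if i = 0 then 0 else n, 0, 0, 0, rfl, rfl, by simpa using hn, by omega, by omega,
    by omega, by simp [castFin]⟩

theorem IsQuiverProduct.mul {k n : ℕ} (hkn : k < n) {A : Matrix (Fin n) (Fin k) R}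
    {B : Matrix (Fin k) (Fin n) R} (hA : Injective A.mulVecLin) (hB : Surjective B.mulVecLin)
    {c : R} (h : IsQuiverProduct k (B * A + c • 1)) : IsQuiverProduct n (A * B) := by
  obtain ⟨m, dims, lam, α, β, rfl, h0, hmono, hinj, hsurj, hmom, htop⟩ := h
  rw [castFin_rfl] at htop
  refine ⟨m + 1, snocDims dims m n, update lam (m + 1) c, snocUp α A, snocDown β B,
    snocDims_of_lt (by omega), by rwa [snocDims_of_le (by omega)], ?_, ?_, ?_, ?_, ?_⟩
  · intro i hi
    rcases Nat.lt_or_ge i (m + 1) with hi' | hi'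
    · rw [snocDims_of_le (by omega), snocDims_of_le (by omega)]
      exact hmono i (by omega)
    · rw [snocDims_of_le (by omega), snocDims_of_lt (by omega), show i = m + 1 by omega]
      exact hkn
  · intro i h1 h2
    rcases Nat.lt_or_ge i (m + 1) with hi | hi
    · rw [snocUp_of_le _ _ (by omega), injective_mulVecLin_castFin_iff]
      exact hinj i h1 (by omega)
    · rw [show i = m + 1 by omega, snocUp_last, injective_mulVecLin_castFin_iff]
      exact hA
  · intro i h1 h2
    rcases Nat.lt_or_ge i (m + 1) with hi | hi
    · rw [snocDown_of_le _ _ (by omega), surjective_mulVecLin_castFin_iff]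
      exact hsurj i h1 (by omega)
    · rw [show i = m + 1 by omega, snocDown_last, surjective_mulVecLin_castFin_iff]
      exact hB
  · intro j hj
    rw [snocUp_of_le _ _ (by omega), snocDown_of_le _ _ (by omega), castFin_mul_castFin]
    rcases Nat.lt_or_ge j m with hj' | hj'
    · rw [snocUp_of_le _ _ (by omega), snocDown_of_le _ _ (by omega), castFin_mul_castFin,
        ← castFin_sub, hmom j hj', update_of_ne (by omega), castFin_smul, castFin_one]
    · obtain rfl : j = m := by omega
      rw [snocUp_last, snocDown_last, castFin_mul_castFin, ← castFin_sub, htop,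
        add_sub_cancel_left, update_self, castFin_smul, castFin_one]
  · rw [snocUp_last, snocDown_last, castFin_mul_castFin, castFin_castFin, castFin_rfl]

end QuiverProduct

theorem exists_isQuiverProduct_add_smul_one {K : Type*} [Field K] [IsAlgClosed K] {n : ℕ}
    (hn : 0 < n) (X : Matrix (Fin n) (Fin n) K) : ∃ t : K, IsQuiverProduct n (X + t • 1) := by
  induction n using Nat.strong_induction_on with
  | _ n ih =>
  have : Nonempty (Fin n) := ⟨⟨0, hn⟩⟩
  obtain ⟨μ, hrank⟩ := X.exists_rank_sub_smul_one_lt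
  rw [Fintype.card_fin] at hrank
  obtain ⟨A, B, hA, hB, hAB⟩ := (X - μ • 1).exists_injective_surjective_mul_eq
  refine ⟨-μ, ?_⟩
  rw [neg_smul, ← sub_eq_add_neg, ← hAB]
  rcases Nat.eq_zero_or_pos (X - μ • 1).rank with hzero | hpos
  · have : IsEmpty (Fin (X - μ • 1).rank) := by rw [hzero]; infer_instance
    rw [Subsingleton.elim A 0, Matrix.zero_mul]
    exact isQuiverProduct_zero hn
  · obtain ⟨c, hc⟩ := ih _ hrank hpos (B * A)
    exact hc.mul hrank hA hB

theorem add_smul_one_sub_trace_div_smul_one {K : Type*} [Field K] [CharZero K] {n : ℕ}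
    (hn : n ≠ 0) {Y : Matrix (Fin n) (Fin n) K} (hY : trace Y = 0) (t : K) :
    Y + t • 1 - (trace (Y + t • 1) / (n : K)) • 1 = Y := by
  have hn' : (n : K) ≠ 0 := Nat.cast_ne_zero.mpr hn
  rw [trace_add, trace_smul, trace_one, Fintype.card_fin, hY, zero_add, smul_eq_mul,
    mul_div_cancel_right₀ t hn', add_sub_cancel_right]

/-- (Here the paper's `r` is `m + 1`, `m ≥ 0`, so `r ≥ 1`
automatically; the quiver maps are `α i : ℂ^(dims i) → ℂ^(dims (i+1))` and
`β i : ℂ^(dims (i+1)) → ℂ^(dims i)` for `i = 0, …, m`, with `dims 0 = 0`.)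

Every trace-free `n × n` complex matrix `Y` (`n ≥ 1`) arises as the trace-free
part of `X = α_m β_m` for a quiver with strictly ordered dimension vector
`0 = dims 0 < dims 1 < … < dims (m+1) = n`, all `α_i` injective, all `β_i`
surjective, satisfying the complex moment map equations at some level
`(λ_1, …, λ_m)`. -/
theorem statement11 (n : ℕ) (hn : 1 ≤ n) (Y : Matrix (Fin n) (Fin n) ℂ)
    (hY : Matrix.trace Y = 0) :
    ∃ (m : ℕ) (dims : ℕ → ℕ) (lam : ℕ → ℂ)
      (α : ∀ i : ℕ, Matrix (Fin (dims (i+1))) (Fin (dims i)) ℂ)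
      (β : ∀ i : ℕ, Matrix (Fin (dims i)) (Fin (dims (i+1))) ℂ)
      (hc : dims (m+1) = n),
      dims 0 = 0 ∧
      (∀ i ≤ m, dims i < dims (i+1)) ∧
      (∀ i, 1 ≤ i → i ≤ m → Function.Injective (α i).mulVecLin) ∧
      (∀ i, 1 ≤ i → i ≤ m → Function.Surjective (β i).mulVecLin) ∧
      (∀ j < m, α j * β j - β (j+1) * α (j+1) =
        lam (j+1) • (1 : Matrix (Fin (dims (j+1))) (Fin (dims (j+1))) ℂ)) ∧
      Matrix.submatrix
          (α m * β m - (Matrix.trace (α m * β m) / (n : ℂ)) • 1)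
          (Fin.cast hc.symm) (Fin.cast hc.symm) = Y := by
  obtain ⟨t, m, dims, lam, α, β, rfl, h0, hmono, hinj, hsurj, hmom, htop⟩ :=
    exists_isQuiverProduct_add_smul_one hn Y
  refine ⟨m, dims, lam, α, β, rfl, h0, hmono, hinj, hsurj, hmom, ?_⟩
  change castFin rfl rfl _ = Y
  rw [castFin_rfl] at htop ⊢
  rw [htop, add_smul_one_sub_trace_div_smul_one (by omega) hY]
end

section
/- Fix integers r ≥ 2 and 0 = n_0 ≤ n_1 ≤ … ≤ n_r = n, and a quiver (α, β). Suppose that for every i = 1,…,r−1 at least one of the following holds: α_i is injective or β_i is surjective. If g_i ∈ GL(n_i,ℂ) for i = 1,…,r−1 satisfy g_{i+1} α_i = α_i g_i and g_i β_i = β_i g_{i+1} for i = 1,…,r−2, together with α_{r−1} g_{r−1} = α_{r−1} and g_{r−1} β_{r−1} = β_{r−1}, then g_i = I for every i. In other words, the stabiliser of such a quiver in ∏_{i=1}^{r−1} GL(n_i,ℂ) is trivial. -/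
/-!
The stabiliser is killed from the top vertex downwards. At vertex `i`, once `g (i+1) = 1` (or,
at `i = m`, by the framing relations), the intertwining relations read `α i * g i = α i` and
`g i * β i = β i`. If `α i` is injective the first forces `g i = 1`; if `β i` is surjective,
`g i` is the identity on the image of `β i`, which is everything.
-/

namespace Matrix

variable {m n R : Type*} [Fintype n] [DecidableEq n] [CommRing R]

theorem eq_one_of_mul_eq_left_of_injective {A : Matrix m n R} {M : Matrix n n R}
    (hA : Function.Injective A.mulVecLin) (h : A * M = A) : M = 1 := by
  refine toLin'.injective (LinearMap.ext fun v => hA ?_)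
  simpa [mulVec_mulVec] using congr_arg (· *ᵥ v) h

theorem eq_one_of_mul_eq_right_of_surjective [Fintype m] {B : Matrix n m R} {M : Matrix n n R}
    (hB : Function.Surjective B.mulVecLin) (h : M * B = B) : M = 1 := by
  refine toLin'.injective (LinearMap.ext fun v => ?_)
  obtain ⟨w, rfl⟩ := hB v
  simpa [mulVec_mulVec] using congr_arg (· *ᵥ w) h

theorem GeneralLinearGroup.eq_one_of_mul_eq_left_of_mul_eq_right [Fintype m]
    {A : Matrix m n R} {B : Matrix n m R} {g : GL n R}
    (hAB : Function.Injective A.mulVecLin ∨ Function.Surjective B.mulVecLin)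
    (hA : A * (g : Matrix n n R) = A) (hB : (g : Matrix n n R) * B = B) : g = 1 :=
  Units.ext <| hAB.elim (eq_one_of_mul_eq_left_of_injective · hA)
    (eq_one_of_mul_eq_right_of_surjective · hB)

end Matrix

theorem statement12_general (m : ℕ) (dims : ℕ → ℕ)
    (α : ∀ i : ℕ, Matrix (Fin (dims (i+1))) (Fin (dims i)) ℂ)
    (β : ∀ i : ℕ, Matrix (Fin (dims i)) (Fin (dims (i+1))) ℂ)
    (hred : ∀ i, 1 ≤ i → i ≤ m →
      Function.Injective (α i).mulVecLin ∨ Function.Surjective (β i).mulVecLin)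
    (g : ∀ i : ℕ, Matrix.GeneralLinearGroup (Fin (dims i)) ℂ)
    (hgα : ∀ i, 1 ≤ i → i ≤ m - 1 →
      (↑(g (i+1)) : Matrix (Fin (dims (i+1))) (Fin (dims (i+1))) ℂ) * α i =
        α i * (↑(g i) : Matrix (Fin (dims i)) (Fin (dims i)) ℂ))
    (hgβ : ∀ i, 1 ≤ i → i ≤ m - 1 →
      (↑(g i) : Matrix (Fin (dims i)) (Fin (dims i)) ℂ) * β i =
        β i * (↑(g (i+1)) : Matrix (Fin (dims (i+1))) (Fin (dims (i+1))) ℂ))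
    (hgαtop : α m * (↑(g m) : Matrix (Fin (dims m)) (Fin (dims m)) ℂ) = α m)
    (hgβtop : (↑(g m) : Matrix (Fin (dims m)) (Fin (dims m)) ℂ) * β m = β m) :
    ∀ i, 1 ≤ i → i ≤ m → g i = 1 := by
  intro i hi him
  induction him using Nat.decreasingInduction with
  | self =>
    exact Matrix.GeneralLinearGroup.eq_one_of_mul_eq_left_of_mul_eq_right
      (hred m hi le_rfl) hgαtop hgβtop
  | of_succ k hkm ih =>
    have hsucc : g (k + 1) = 1 := ih (by omega)
    have hα := hgα k hi (by omega)
    have hβ := hgβ k hi (by omega)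
    rw [hsucc, Units.val_one] at hα hβ
    exact Matrix.GeneralLinearGroup.eq_one_of_mul_eq_left_of_mul_eq_right
      (hred k hi hkm.le) (by simpa using hα.symm) (by simpa using hβ)

/-- (Here the paper's `r` is `m + 1`, so `r ≥ 2` is `1 ≤ m`;
the quiver maps are `α i : ℂ^(dims i) → ℂ^(dims (i+1))` and
`β i : ℂ^(dims (i+1)) → ℂ^(dims i)` for `i = 0, …, m`, with `dims 0 = 0`.)

Suppose that for each `i = 1, …, m` either `α_i` is injective or `β_i` is
surjective.  If `g_i ∈ GL(dims i, ℂ)` satisfy `g_{i+1} α_i = α_i g_i` and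
`g_i β_i = β_i g_{i+1}` for `i = 1, …, m−1`, together with
`α_m g_m = α_m` and `g_m β_m = β_m`, then `g_i = 1` for every `i = 1, …, m`:
the stabiliser of such a quiver in `∏_{i=1}^{m} GL(dims i, ℂ)` is trivial. -/
theorem statement12 (m : ℕ) (hm : 1 ≤ m) (dims : ℕ → ℕ) (h0 : dims 0 = 0)
    (hmono : ∀ i ≤ m, dims i ≤ dims (i+1))
    (α : ∀ i : ℕ, Matrix (Fin (dims (i+1))) (Fin (dims i)) ℂ)
    (β : ∀ i : ℕ, Matrix (Fin (dims i)) (Fin (dims (i+1))) ℂ)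
    (hred : ∀ i, 1 ≤ i → i ≤ m →
      Function.Injective (α i).mulVecLin ∨ Function.Surjective (β i).mulVecLin)
    (g : ∀ i : ℕ, Matrix.GeneralLinearGroup (Fin (dims i)) ℂ)
    (hgα : ∀ i, 1 ≤ i → i ≤ m - 1 →
      (↑(g (i+1)) : Matrix (Fin (dims (i+1))) (Fin (dims (i+1))) ℂ) * α i =
        α i * (↑(g i) : Matrix (Fin (dims i)) (Fin (dims i)) ℂ))
    (hgβ : ∀ i, 1 ≤ i → i ≤ m - 1 →
      (↑(g i) : Matrix (Fin (dims i)) (Fin (dims i)) ℂ) * β i =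
        β i * (↑(g (i+1)) : Matrix (Fin (dims (i+1))) (Fin (dims (i+1))) ℂ))
    (hgαtop : α m * (↑(g m) : Matrix (Fin (dims m)) (Fin (dims m)) ℂ) = α m)
    (hgβtop : (↑(g m) : Matrix (Fin (dims m)) (Fin (dims m)) ℂ) * β m = β m) :
    ∀ i, 1 ≤ i → i ≤ m → g i = 1 :=
  statement12_general m dims α β hred g hgα hgβ hgαtop hgβtop
end

section
/- Let X be an upper triangular n×n complex matrix whose diagonal entries are pairwise distinct. Then there exists a unique upper triangular unipotent matrix u (upper triangular with all diagonal entries equal to 1) such that u X u⁻¹ is a diagonal matrix; its diagonal is then the diagonal of X. -/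
open Matrix Finset

noncomputable def Ustat {n : ℕ} (X : Matrix (Fin n) (Fin n) ℂ) : Fin n → Fin n → ℂ
  | i, j =>
    if h : i < j then
      (∑ k ∈ (Finset.Ico i j).attach, Ustat X i k.1 * X k.1 j) / (X i i - X j j)
    else if i = j then 1 else 0
  termination_by i j => (j : ℕ) - (i : ℕ)
  decreasing_by
    have := Finset.mem_Ico.mp k.2
    simp only [Fin.lt_def, Fin.le_def] at this h ⊢
    omega

lemma Ustat_lt {n : ℕ} (X : Matrix (Fin n) (Fin n) ℂ) {i j : Fin n} (h : j < i) :
    Ustat X i j = 0 := by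
  rw [Ustat]
  rw [dif_neg (by omega), if_neg (by omega)]

lemma Ustat_diag {n : ℕ} (X : Matrix (Fin n) (Fin n) ℂ) (i : Fin n) :
    Ustat X i i = 1 := by
  rw [Ustat]; simp

lemma Ustat_gt {n : ℕ} (X : Matrix (Fin n) (Fin n) ℂ) {i j : Fin n} (h : i < j) :
    Ustat X i j = (∑ k ∈ Finset.Ico i j, Ustat X i k * X k j) / (X i i - X j j) := by
  rw [Ustat, dif_pos h]; congr 1; exact Finset.sum_attach (Finset.Ico i j) (fun k => Ustat X i k * X k j)

lemma diag_mul' {n : ℕ} {A B : Matrix (Fin n) (Fin n) ℂ} (hA : ∀ i j, j < i → A i j = 0)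
    (hB : ∀ i j, j < i → B i j = 0) (i : Fin n) : (A * B) i i = A i i * B i i := by
  rw [Matrix.mul_apply]
  apply Finset.sum_eq_single
  · intro k _ hk
    rcases lt_or_gt_of_ne hk with h | h
    · rw [hA _ _ h, zero_mul]
    · rw [hB _ _ h, mul_zero]
  · simp

lemma Ustat_mul {n : ℕ} (X : Matrix (Fin n) (Fin n) ℂ)
    (hut : ∀ i j : Fin n, j < i → X i j = 0)
    (hdiag : Function.Injective fun i : Fin n => X i i) :
    (Matrix.of (Ustat X)) * X = Matrix.diagonal (fun i => X i i) * Matrix.of (Ustat X) := by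
  ext i j
  rw [Matrix.mul_apply, Matrix.diagonal_mul]
  simp only [Matrix.of_apply]
  rcases lt_trichotomy i j with hij | rfl | hij
  · have hd : X i i - X j j ≠ 0 := sub_ne_zero.mpr (fun h => (ne_of_lt hij) (hdiag h))
    have e1 : ∑ k : Fin n, Ustat X i k * X k j = ∑ k ∈ Finset.Icc i j, Ustat X i k * X k j := by
      refine (Finset.sum_subset (Finset.subset_univ _) ?_).symm
      intro k _ hk
      rw [Finset.mem_Icc, not_and_or] at hk
      rcases hk with hk | hk
      · rw [Ustat_lt X (lt_of_not_ge hk), zero_mul]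
      · rw [hut _ _ (lt_of_not_ge hk), mul_zero]
    rw [e1, ← Finset.Ico_insert_right hij.le, Finset.sum_insert Finset.right_notMem_Ico,
      Ustat_gt X hij]
    field_simp
    ring
  · rw [Ustat_diag, mul_one]
    rw [Finset.sum_eq_single_of_mem i (Finset.mem_univ i) ?_]
    · rw [Ustat_diag, one_mul]
    · intro k _ hk
      rcases lt_or_gt_of_ne hk with h | h
      · rw [Ustat_lt X h, zero_mul]
      · rw [hut _ _ h, mul_zero]
  · rw [Ustat_lt X hij, mul_zero]
    apply Finset.sum_eq_zero
    intro k _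
    rcases lt_or_ge k i with h | h
    · rw [Ustat_lt X h, zero_mul]
    · rw [hut _ _ (lt_of_lt_of_le hij h), mul_zero]

lemma eq_Ustat {n : ℕ} {X v : Matrix (Fin n) (Fin n) ℂ}
    (hut : ∀ i j : Fin n, j < i → X i j = 0)
    (hdiag : Function.Injective fun i : Fin n => X i i)
    (hv1 : ∀ i j, j < i → v i j = 0) (hv2 : ∀ i, v i i = 1)
    (hmul : v * X = Matrix.diagonal (fun i => X i i) * v) :
    ∀ i j, v i j = Ustat X i j := by
  suffices H : ∀ m : ℕ, ∀ i j : Fin n, (j : ℕ) - (i : ℕ) = m → v i j = Ustat X i j by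
    intro i j; exact H _ i j rfl
  intro m
  induction m using Nat.strong_induction_on with
  | _ m ih =>
    intro i j hm
    rcases lt_trichotomy i j with hij | rfl | hij
    · have hd : X i i - X j j ≠ 0 := sub_ne_zero.mpr (fun h => (ne_of_lt hij) (hdiag h))
      have key : (v * X) i j = (Matrix.diagonal (fun i => X i i) * v) i j := by rw [hmul]
      rw [Matrix.mul_apply, Matrix.diagonal_mul] at key
      have e1 : ∑ k : Fin n, v i k * X k j = ∑ k ∈ Finset.Icc i j, v i k * X k j := by
        refine (Finset.sum_subset (Finset.subset_univ _) ?_).symm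
        intro k _ hk
        rw [Finset.mem_Icc, not_and_or] at hk
        rcases hk with hk | hk
        · rw [hv1 _ _ (lt_of_not_ge hk), zero_mul]
        · rw [hut _ _ (lt_of_not_ge hk), mul_zero]
      rw [e1, ← Finset.Ico_insert_right hij.le, Finset.sum_insert Finset.right_notMem_Ico] at key
      have e2 : ∑ k ∈ Finset.Ico i j, v i k * X k j
          = ∑ k ∈ Finset.Ico i j, Ustat X i k * X k j := by
        apply Finset.sum_congr rfl
        intro k hk
        rw [Finset.mem_Ico] at hk
        have hk1 : (i : ℕ) ≤ k := hk.1
        have hk2 : (k : ℕ) < j := hk.2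
        have hij' : (i : ℕ) < j := hij
        rw [ih ((k : ℕ) - i) (by omega) i k rfl]
      rw [e2] at key
      rw [Ustat_gt X hij, eq_div_iff hd]
      linear_combination -key
    · rw [hv2, Ustat_diag]
    · rw [hv1 _ _ hij, Ustat_lt X hij]

/-- Let `X` be an upper triangular `n × n` complex matrix
whose diagonal entries are pairwise distinct.  Then there is a unique upper
triangular unipotent matrix `u` (upper triangular with all diagonal entries
`1`) such that `u X u⁻¹` is diagonal; moreover the diagonal of `u X u⁻¹` is
then the diagonal of `X`. -/
theorem statement15 (n : ℕ) (X : Matrix (Fin n) (Fin n) ℂ)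
    (hut : ∀ i j : Fin n, j < i → X i j = 0)
    (hdiag : Function.Injective fun i : Fin n => X i i) :
    (∃! u : Matrix (Fin n) (Fin n) ℂ,
      ((∀ i j : Fin n, j < i → u i j = 0) ∧ (∀ i : Fin n, u i i = 1)) ∧
        (u * X * u⁻¹).IsDiag) ∧
    (∀ u : Matrix (Fin n) (Fin n) ℂ,
      (∀ i j : Fin n, j < i → u i j = 0) → (∀ i : Fin n, u i i = 1) →
      (u * X * u⁻¹).IsDiag → ∀ i : Fin n, (u * X * u⁻¹) i i = X i i) := by
  -- basic facts about unipotent upper triangular matrices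
  have hdet : ∀ v : Matrix (Fin n) (Fin n) ℂ, (∀ i j : Fin n, j < i → v i j = 0) →
      (∀ i : Fin n, v i i = 1) → IsUnit v.det := by
    intro v hv1 hv2
    rw [Matrix.det_of_upperTriangular (fun i j h => hv1 i j h)]
    simp [hv2]
  have hinv_tri : ∀ v : Matrix (Fin n) (Fin n) ℂ, (∀ i j : Fin n, j < i → v i j = 0) →
      (∀ i : Fin n, v i i = 1) → ∀ i j : Fin n, j < i → v⁻¹ i j = 0 := by
    intro v hv1 hv2 i j h
    haveI := v.invertibleOfIsUnitDet (hdet v hv1 hv2)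
    exact Matrix.blockTriangular_inv_of_blockTriangular (fun i j h => hv1 i j h) h
  have hinv_diag : ∀ v : Matrix (Fin n) (Fin n) ℂ, (∀ i j : Fin n, j < i → v i j = 0) →
      (∀ i : Fin n, v i i = 1) → ∀ i : Fin n, v⁻¹ i i = 1 := by
    intro v hv1 hv2 i
    have h1 : (v * v⁻¹) i i = 1 := by rw [Matrix.mul_nonsing_inv v (hdet v hv1 hv2)]; simp
    rwa [diag_mul' hv1 (hinv_tri v hv1 hv2), hv2, one_mul] at h1
  -- second part
  have part2 : ∀ u : Matrix (Fin n) (Fin n) ℂ,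
      (∀ i j : Fin n, j < i → u i j = 0) → (∀ i : Fin n, u i i = 1) →
      (u * X * u⁻¹).IsDiag → ∀ i : Fin n, (u * X * u⁻¹) i i = X i i := by
    intro v hv1 hv2 _ i
    have h1 : ∀ i j : Fin n, j < i → (v * X) i j = 0 := by
      intro i j h
      rw [Matrix.mul_apply]
      apply Finset.sum_eq_zero
      intro k _
      rcases lt_or_ge k i with hk | hk
      · rw [hv1 _ _ hk, zero_mul]
      · rw [hut _ _ (lt_of_lt_of_le h hk), mul_zero]
    rw [diag_mul' h1 (hinv_tri v hv1 hv2), diag_mul' hv1 hut, hv2,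
      hinv_diag v hv1 hv2, one_mul, mul_one]
  refine ⟨?_, part2⟩
  -- if v X v⁻¹ is diagonal then v X = D v
  have conv : ∀ v : Matrix (Fin n) (Fin n) ℂ,
      (∀ i j : Fin n, j < i → v i j = 0) → (∀ i : Fin n, v i i = 1) →
      (v * X * v⁻¹).IsDiag → v * X = Matrix.diagonal (fun i => X i i) * v := by
    intro v hv1 hv2 hD
    have hvXv : v * X * v⁻¹ = Matrix.diagonal (fun i => X i i) := by
      ext i j
      by_cases h : i = j
      · subst h
        rw [part2 v hv1 hv2 hD i, Matrix.diagonal_apply_eq]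
      · rw [hD h, Matrix.diagonal_apply_ne _ h]
    calc v * X = v * X * v⁻¹ * v := by
          rw [Matrix.mul_assoc (v * X), Matrix.nonsing_inv_mul v (hdet v hv1 hv2), mul_one]
      _ = Matrix.diagonal (fun i => X i i) * v := by rw [hvXv]
  -- existence
  refine ⟨Matrix.of (Ustat X), ⟨⟨fun i j h => Ustat_lt X h, fun i => Ustat_diag X i⟩, ?_⟩, ?_⟩
  · have hu1 : ∀ i j : Fin n, j < i → (Matrix.of (Ustat X)) i j = 0 := fun i j h => Ustat_lt X h
    have hu2 : ∀ i : Fin n, (Matrix.of (Ustat X)) i i = 1 := fun i => Ustat_diag X i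
    have : Matrix.of (Ustat X) * X * (Matrix.of (Ustat X))⁻¹
        = Matrix.diagonal (fun i => X i i) := by
      rw [Ustat_mul X hut hdiag, Matrix.mul_assoc,
        Matrix.mul_nonsing_inv _ (hdet _ hu1 hu2), mul_one]
    rw [this]
    exact Matrix.isDiag_diagonal _
  · rintro v ⟨⟨hv1, hv2⟩, hvD⟩
    ext i j
    exact eq_Ustat hut hdiag hv1 hv2 (conv v hv1 hv2 hvD) i j
end

section
/- Fix a strictly ordered dimension vector 0 < n_1 < n_2 < … < n_r = n (set n_0 = 0, k_i = n_{i+1} − n_i), and suppose the quiver (α, β) satisfies the complex moment map equations at level (λ_1,…,λ_{r−1}) ∈ ℂ^{r−1} with each β_i in the standard form β_i = (0_{n_i×k_i} ∣ I_{n_i}) (projection onto the last n_i coordinates). Then X = α_{r−1}β_{r−1} is block upper triangular with respect to the decomposition of ℂ^n into consecutive coordinate blocks of sizes k_{r−1}, k_{r−2}, …, k_1, k_0 = n_1, and for j = 1,…,r its j-th diagonal block equals the scalar matrix −(λ_{r−1} + λ_{r−2} + ⋯ + λ_{r−j+1}) I (so the first diagonal block is 0, the second is −λ_{r−1} I, and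 the last is −(λ_{r−1} + ⋯ + λ_1) I). Conversely, every n×n complex matrix X which is block upper triangular of this shape with these scalar diagonal blocks arises in this way from some quiver (α, β) with the standard β's satisfying the complex moment map equations at level (λ_1,…,λ_{r−1}). -/
/-!
With `β = stdBeta a b`, the product `β * α` is the lower right `a × a` corner of `α * β`, and
the first `b - a` columns of `α * β` vanish. The moment map equation
`α_i β_i = β_{i+1} α_{i+1} + λ_{i+1} I` therefore says that `X_{i+1} = α_{i+1} β_{i+1}` has
vanishing first `k_{i+1}` columns and lower right corner `X_i - λ_{i+1} I`. Starting from
`X_0 = 0` (as `dims 0 = 0`), induction gives the block form of `X_m`; read backwards, the same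
recursion reconstructs the `α`'s from any `X` of this form, `α_{i+1}` being `X_{i+1}` with its
first `k_{i+1}` columns dropped.
-/

/-- The standard surjection `β = (0_{a×(b-a)} ∣ I_a) : ℂ^b → ℂ^a`
(projection onto the last `a` coordinates, for `a ≤ b`). -/
def stdBeta (a b : ℕ) : Matrix (Fin a) (Fin b) ℂ :=
  Matrix.of fun j k => if (k : ℕ) = (j : ℕ) + (b - a) then 1 else 0

namespace Fin

def tailEmb {a b : ℕ} (hab : a ≤ b) (i : Fin a) : Fin b :=
  ⟨i + (b - a), by omega⟩

@[simp]
theorem val_tailEmb {a b : ℕ} (hab : a ≤ b) (i : Fin a) : (tailEmb hab i : ℕ) = i + (b - a) :=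
  rfl

theorem tailEmb_injective {a b : ℕ} (hab : a ≤ b) : Function.Injective (tailEmb hab) :=
  fun i j h => Fin.ext (by simpa using congrArg Fin.val h)

theorem exists_tailEmb_eq {a b : ℕ} (hab : a ≤ b) (p : Fin b) (hp : b - a ≤ (p : ℕ)) :
    ∃ i : Fin a, tailEmb hab i = p :=
  ⟨⟨p - (b - a), by omega⟩, Fin.ext (by simp; omega)⟩

end Fin

namespace Matrix

variable {R : Type*}

def lowerRightCorner {a b : ℕ} (hab : a ≤ b) (Z : Matrix (Fin b) (Fin b) R) :
    Matrix (Fin a) (Fin a) R :=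
  Z.submatrix (Fin.tailEmb hab) (Fin.tailEmb hab)

theorem lowerRightCorner_add_smul_one_apply [Semiring R] {a b : ℕ} (hab : a ≤ b)
    (Z : Matrix (Fin b) (Fin b) R) (c : R) (p q : Fin a) :
    (lowerRightCorner hab Z + c • 1) p q =
      Z (Fin.tailEmb hab p) (Fin.tailEmb hab q) + if p = q then c else 0 := by
  simp [lowerRightCorner, one_apply]

section stdBeta

variable {a b : ℕ} (hab : a ≤ b)

theorem stdBeta_eq_submatrix_one :
    stdBeta a b = (1 : Matrix (Fin b) (Fin b) ℂ).submatrix (Fin.tailEmb hab) id := by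
  ext j k
  simp [stdBeta, one_apply, Fin.ext_iff, eq_comm]

theorem stdBeta_mul {c : Type*} (A : Matrix (Fin b) c ℂ) :
    stdBeta a b * A = A.submatrix (Fin.tailEmb hab) id := by
  rw [stdBeta_eq_submatrix_one hab, ← submatrix_id_id A,
    ← submatrix_mul _ _ _ id _ Function.bijective_id]
  simp

theorem stdBeta_submatrix_tailEmb : (stdBeta a b).submatrix id (Fin.tailEmb hab) = 1 := by
  rw [stdBeta_eq_submatrix_one hab, submatrix_submatrix]
  exact submatrix_one _ (Fin.tailEmb_injective hab)

theorem mul_stdBeta_apply_of_lt {a b : ℕ} {r : Type*} (A : Matrix r (Fin a) ℂ) (p : r)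
    (q : Fin b) (hq : (q : ℕ) < b - a) : (A * stdBeta a b) p q = 0 :=
  (mul_apply ..).trans <|
  Finset.sum_eq_zero fun k _ => by rw [stdBeta, of_apply, if_neg (by omega), mul_zero]

theorem lowerRightCorner_mul_stdBeta (A : Matrix (Fin b) (Fin a) ℂ) :
    lowerRightCorner hab (A * stdBeta a b) = stdBeta a b * A := by
  rw [lowerRightCorner, submatrix_mul _ _ _ id _ Function.bijective_id,
    stdBeta_submatrix_tailEmb hab, stdBeta_mul hab, Matrix.mul_one]

theorem submatrix_tailEmb_mul_stdBeta {r : Type*} (Z : Matrix r (Fin b) ℂ)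
    (hZ : ∀ p (q : Fin b), (q : ℕ) < b - a → Z p q = 0) :
    Z.submatrix id (Fin.tailEmb hab) * stdBeta a b = Z := by
  ext p q
  by_cases hq : (q : ℕ) < b - a
  · rw [hZ p q hq, mul_stdBeta_apply_of_lt _ _ _ hq]
  · obtain ⟨i, rfl⟩ := Fin.exists_tailEmb_eq hab q (by omega)
    rw [stdBeta_eq_submatrix_one hab, mul_apply, Finset.sum_eq_single i]
    · simp [one_apply]
    · intro k _ hk
      simp [(Fin.tailEmb_injective hab).ne hk]
    · simp

end stdBeta

end Matrix

open Matrix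

section BlockForm

variable {R : Type*} [CommRing R]

/-- Block `s ≤ i` is the coordinate range `[dims (i+1) - dims (s+1), dims (i+1) - dims s)`, so
block `i` is the top left one and block `0` the bottom right one. -/
def IsScalarBlockTriangular (dims : ℕ → ℕ) (lam : ℕ → R) (i : ℕ)
    (Y : Matrix (Fin (dims (i+1))) (Fin (dims (i+1))) R) : Prop :=
  (∀ s, 1 ≤ s → s ≤ i → ∀ p q : Fin (dims (i+1)),
    (q : ℕ) < dims (i+1) - dims s → dims (i+1) - dims s ≤ (p : ℕ) → Y p q = 0) ∧
  (∀ s ≤ i, ∀ p q : Fin (dims (i+1)),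
    dims (i+1) - dims (s+1) ≤ (p : ℕ) → (p : ℕ) < dims (i+1) - dims s →
    dims (i+1) - dims (s+1) ≤ (q : ℕ) → (q : ℕ) < dims (i+1) - dims s →
    Y p q = if p = q then -(∑ t ∈ Finset.Icc (s+1) i, lam t) else 0)

theorem isScalarBlockTriangular_zero_iff {dims : ℕ → ℕ} (h0 : dims 0 = 0) (lam : ℕ → R)
    (Y : Matrix (Fin (dims 1)) (Fin (dims 1)) R) :
    IsScalarBlockTriangular dims lam 0 Y ↔ Y = 0 := by
  constructor
  · rintro ⟨-, hdiag⟩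
    ext p q
    simpa using hdiag 0 le_rfl p q (by omega) (by simp [h0]) (by omega) (by simp [h0])
  · rintro rfl
    exact ⟨by omega, fun s hs p q _ _ _ _ => by
      obtain rfl : s = 0 := by omega
      simp⟩

variable {dims : ℕ → ℕ} {lam : ℕ → R} {i : ℕ}

theorem isScalarBlockTriangular_succ_iff (hd : MonotoneOn dims (Set.Iic (i+1+1)))
    (Z : Matrix (Fin (dims (i+1+1))) (Fin (dims (i+1+1))) R) :
    IsScalarBlockTriangular dims lam (i+1) Z ↔
      (∀ p q : Fin (dims (i+1+1)), (q : ℕ) < dims (i+1+1) - dims (i+1) → Z p q = 0) ∧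
      IsScalarBlockTriangular dims lam i
        (lowerRightCorner (hd (by simp) (by simp) (by omega)) Z + lam (i+1) • 1) := by
  have mono : ∀ {a b}, a ≤ b → b ≤ i + 1 + 1 → dims a ≤ dims b :=
    fun hab hb => hd (by simp; omega) (by simpa using hb) hab
  have hk : dims (i+1) ≤ dims (i+1+1) := mono (by omega) le_rfl
  constructor
  · rintro ⟨hlow, hdiag⟩
    refine ⟨fun p q hq => ?_, fun s hs1 hs p q hq hp => ?_, fun s hs p q hp1 hp2 hq1 hq2 => ?_⟩
    · by_cases hp : dims (i+1+1) - dims (i+1) ≤ (p : ℕ)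
      · exact hlow (i+1) (by omega) le_rfl p q hq hp
      · simpa using hdiag (i+1) le_rfl p q (by omega) (by omega) (by omega) (by omega)
    · have := mono (a := s) (b := i + 1) (by omega) (by omega)
      rw [lowerRightCorner_add_smul_one_apply, if_neg (by rintro rfl; omega),
        hlow s hs1 (by omega) _ _ (by simp; omega) (by simp; omega), add_zero]
    · have := mono (a := s + 1) (b := i + 1) (by omega) (by omega)
      rw [lowerRightCorner_add_smul_one_apply,
        hdiag s (by omega) _ _ (by simp; omega) (by simp; omega) (by simp; omega) (by simp; omega),
        Finset.sum_Icc_succ_top (by omega : s + 1 ≤ i + 1)]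
      simp only [(Fin.tailEmb_injective _).eq_iff]
      split_ifs <;> ring
  · rintro ⟨hcol, hlow, hdiag⟩
    refine ⟨fun s hs1 hs p q hq hp => ?_, fun s hs p q hp1 hp2 hq1 hq2 => ?_⟩
    · by_cases hqk : (q : ℕ) < dims (i+1+1) - dims (i+1)
      · exact hcol p q hqk
      obtain hs | rfl : s ≤ i ∨ s = i + 1 := by omega
      · have := mono (a := s) (b := i + 1) (by omega) (by omega)
        obtain ⟨p, rfl⟩ := Fin.exists_tailEmb_eq hk p (by omega)
        obtain ⟨q, rfl⟩ := Fin.exists_tailEmb_eq hk q (by omega)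
        have h := hlow s hs1 hs p q (by simp at hq; omega) (by simp at hp; omega)
        rwa [lowerRightCorner_add_smul_one_apply, if_neg (by rintro rfl; simp at hp hq; omega),
          add_zero] at h
      · omega
    obtain hs | rfl : s ≤ i ∨ s = i + 1 := by omega
    · have := mono (a := s + 1) (b := i + 1) (by omega) (by omega)
      obtain ⟨p, rfl⟩ := Fin.exists_tailEmb_eq hk p (by omega)
      obtain ⟨q, rfl⟩ := Fin.exists_tailEmb_eq hk q (by omega)
      have h := hdiag s hs p q (by simp at hp1; omega) (by simp at hp2; omega)
        (by simp at hq1; omega) (by simp at hq2; omega)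
      rw [lowerRightCorner_add_smul_one_apply] at h
      rw [Finset.sum_Icc_succ_top (by omega : s + 1 ≤ i + 1)]
      simp only [(Fin.tailEmb_injective _).eq_iff]
      split_ifs at h ⊢ <;> linear_combination h
    · simpa using hcol p q hq2

end BlockForm

section Quiver

variable {dims : ℕ → ℕ}

theorem isScalarBlockTriangular_mul {m : ℕ} (h0 : dims 0 = 0)
    (hd : MonotoneOn dims (Set.Iic (m+1))) (lam : ℕ → ℂ)
    (α : ∀ i : ℕ, Matrix (Fin (dims (i+1))) (Fin (dims i)) ℂ)
    (β : ∀ i : ℕ, Matrix (Fin (dims i)) (Fin (dims (i+1))) ℂ)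
    (hβ : ∀ i, 1 ≤ i → i ≤ m → β i = stdBeta (dims i) (dims (i+1)))
    (heq : ∀ j < m, α j * β j - β (j+1) * α (j+1) =
      lam (j+1) • (1 : Matrix (Fin (dims (j+1))) (Fin (dims (j+1))) ℂ)) :
    ∀ i ≤ m, IsScalarBlockTriangular dims lam i (α i * β i)
  | 0, _ => by
    have : IsEmpty (Fin (dims 0)) := by rw [h0]; infer_instance
    rw [isScalarBlockTriangular_zero_iff h0]
    ext
    simp [Matrix.mul_apply]
  | i + 1, hi => by
    have hk : dims (i+1) ≤ dims (i+1+1) := hd (by simp; omega) (by simp; omega) (by omega)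
    have hβ' := hβ (i+1) (by omega) hi
    have hαβ : α i * β i = β (i+1) * α (i+1) + lam (i+1) • 1 :=
      sub_eq_iff_eq_add'.mp (heq i (by omega))
    rw [hβ'] at hαβ
    rw [isScalarBlockTriangular_succ_iff (hd.mono (Set.Iic_subset_Iic.mpr (by omega))), hβ',
      lowerRightCorner_mul_stdBeta hk, ← hαβ]
    exact ⟨fun p q hq => mul_stdBeta_apply_of_lt _ _ _ hq,
      isScalarBlockTriangular_mul h0 hd lam α β hβ heq i (by omega)⟩

theorem exists_alpha_of_isScalarBlockTriangular (h0 : dims 0 = 0) (lam : ℕ → ℂ) :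
    ∀ (m : ℕ), MonotoneOn dims (Set.Iic (m+1)) →
    ∀ X : Matrix (Fin (dims (m+1))) (Fin (dims (m+1))) ℂ,
      IsScalarBlockTriangular dims lam m X →
      ∃ α : ∀ i : ℕ, Matrix (Fin (dims (i+1))) (Fin (dims i)) ℂ,
        (∀ j < m, α j * stdBeta (dims j) (dims (j+1)) -
          stdBeta (dims (j+1)) (dims (j+1+1)) * α (j+1) =
            lam (j+1) • (1 : Matrix (Fin (dims (j+1))) (Fin (dims (j+1))) ℂ)) ∧
        α m * stdBeta (dims m) (dims (m+1)) = X
  | 0, _, X, hX => ⟨0, fun _ hj => absurd hj (Nat.not_lt_zero _), by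
      rw [(isScalarBlockTriangular_zero_iff h0 lam X).mp hX, Pi.zero_apply, Matrix.zero_mul]⟩
  | m + 1, hd, X, hX => by
    have hk : dims (m+1) ≤ dims (m+1+1) := hd (by simp) (by simp) (by omega)
    obtain ⟨hcol, hcorner⟩ := (isScalarBlockTriangular_succ_iff hd X).mp hX
    obtain ⟨α, hα, hαm⟩ := exists_alpha_of_isScalarBlockTriangular h0 lam m
      (hd.mono (Set.Iic_subset_Iic.mpr (by omega))) _ hcorner
    refine ⟨Function.update α (m+1) (X.submatrix id (Fin.tailEmb hk)), fun j hj => ?_, ?_⟩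
    · obtain hj | rfl := Nat.lt_succ_iff_lt_or_eq.mp hj
      · rw [Function.update_of_ne (by omega), Function.update_of_ne (by omega), hα j hj]
      · rw [Function.update_of_ne (by omega), Function.update_self, hαm, stdBeta_mul hk,
          submatrix_submatrix]
        exact add_sub_cancel_left _ _
    · rw [Function.update_self]
      exact submatrix_tailEmb_mul_stdBeta hk X hcol

end Quiver

theorem statement17_general (m : ℕ) (dims : ℕ → ℕ) (h0 : dims 0 = 0)
    (hmono : ∀ i ≤ m, dims i < dims (i+1))
    (lam : ℕ → ℂ) :
    (∀ (α : ∀ i : ℕ, Matrix (Fin (dims (i+1))) (Fin (dims i)) ℂ)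
       (β : ∀ i : ℕ, Matrix (Fin (dims i)) (Fin (dims (i+1))) ℂ),
      (∀ i, 1 ≤ i → i ≤ m → β i = stdBeta (dims i) (dims (i+1))) →
      (∀ j < m, α j * β j - β (j+1) * α (j+1) =
        lam (j+1) • (1 : Matrix (Fin (dims (j+1))) (Fin (dims (j+1))) ℂ)) →
      (∀ s, 1 ≤ s → s ≤ m → ∀ p q : Fin (dims (m+1)),
        (q : ℕ) < dims (m+1) - dims s → dims (m+1) - dims s ≤ (p : ℕ) →
        (α m * β m) p q = 0) ∧
      (∀ s ≤ m, ∀ p q : Fin (dims (m+1)),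
        dims (m+1) - dims (s+1) ≤ (p : ℕ) → (p : ℕ) < dims (m+1) - dims s →
        dims (m+1) - dims (s+1) ≤ (q : ℕ) → (q : ℕ) < dims (m+1) - dims s →
        (α m * β m) p q =
          if p = q then -(∑ t ∈ Finset.Icc (s+1) m, lam t) else 0)) ∧
    (∀ X : Matrix (Fin (dims (m+1))) (Fin (dims (m+1))) ℂ,
      (∀ s, 1 ≤ s → s ≤ m → ∀ p q : Fin (dims (m+1)),
        (q : ℕ) < dims (m+1) - dims s → dims (m+1) - dims s ≤ (p : ℕ) →
        X p q = 0) →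
      (∀ s ≤ m, ∀ p q : Fin (dims (m+1)),
        dims (m+1) - dims (s+1) ≤ (p : ℕ) → (p : ℕ) < dims (m+1) - dims s →
        dims (m+1) - dims (s+1) ≤ (q : ℕ) → (q : ℕ) < dims (m+1) - dims s →
        X p q = if p = q then -(∑ t ∈ Finset.Icc (s+1) m, lam t) else 0) →
      ∃ α : ∀ i : ℕ, Matrix (Fin (dims (i+1))) (Fin (dims i)) ℂ,
        (∀ j < m, α j * stdBeta (dims j) (dims (j+1)) -
          stdBeta (dims (j+1)) (dims (j+2)) * α (j+1) =
            lam (j+1) • (1 : Matrix (Fin (dims (j+1))) (Fin (dims (j+1))) ℂ)) ∧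
        α m * stdBeta (dims m) (dims (m+1)) = X) := by
  have hd : MonotoneOn dims (Set.Iic (m+1)) :=
    monotoneOn_of_le_succ Set.ordConnected_Iic fun i _ _ hi => by
      simp only [Order.succ_eq_add_one, Set.mem_Iic] at hi ⊢
      exact (hmono i (by omega)).le
  exact ⟨fun α β hβ heq => isScalarBlockTriangular_mul h0 hd lam α β hβ heq m le_rfl,
    fun X hlow hdiag => exists_alpha_of_isScalarBlockTriangular h0 lam m hd X ⟨hlow, hdiag⟩⟩

/-- (Here the paper's `r` is `m + 1` and `n = dims (m+1)`,
with a strictly ordered dimension vector `0 = dims 0 < dims 1 < … < dims (m+1)`;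
the quiver maps are `α i : ℂ^(dims i) → ℂ^(dims (i+1))` and
`β i : ℂ^(dims (i+1)) → ℂ^(dims i)` for `i = 0, …, m`.  The blocks of `ℂ^n`
are, for `s = 0, …, m`, the coordinate ranges `[n − dims (s+1), n − dims s)`,
of sizes `k_s = dims (s+1) − dims s`; from top left these are the blocks of
sizes `k_m, k_{m−1}, …, k_1, k_0 = dims 1` of the paper.)

If each `β_i` (`i = 1, …, m`) is in the standard form
`stdBeta (dims i) (dims (i+1))` and `(α, β)` satisfies the complex moment map
equations at level `(λ_1, …, λ_m)`, then `X = α_m β_m` is block upper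
triangular for these blocks and its diagonal block with index `s` is the
scalar matrix `−(λ_m + λ_{m−1} + ⋯ + λ_{s+1}) I`.  Conversely, every matrix
`X` that is block upper triangular of this shape with these scalar diagonal
blocks arises in this way from a quiver with standard `β`'s satisfying the
complex moment map equations at level `(λ_1, …, λ_m)`. -/
theorem statement17 (m : ℕ) (dims : ℕ → ℕ) (h0 : dims 0 = 0)
    (hmono : ∀ i ≤ m, dims i < dims (i+1))
    (hub : ∀ i ≤ m + 1, dims i ≤ dims (m+1))
    (lam : ℕ → ℂ) :
    (∀ (α : ∀ i : ℕ, Matrix (Fin (dims (i+1))) (Fin (dims i)) ℂ)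
       (β : ∀ i : ℕ, Matrix (Fin (dims i)) (Fin (dims (i+1))) ℂ),
      (∀ i, 1 ≤ i → i ≤ m → β i = stdBeta (dims i) (dims (i+1))) →
      (∀ j < m, α j * β j - β (j+1) * α (j+1) =
        lam (j+1) • (1 : Matrix (Fin (dims (j+1))) (Fin (dims (j+1))) ℂ)) →
      (∀ s, 1 ≤ s → s ≤ m → ∀ p q : Fin (dims (m+1)),
        (q : ℕ) < dims (m+1) - dims s → dims (m+1) - dims s ≤ (p : ℕ) →
        (α m * β m) p q = 0) ∧
      (∀ s ≤ m, ∀ p q : Fin (dims (m+1)),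
        dims (m+1) - dims (s+1) ≤ (p : ℕ) → (p : ℕ) < dims (m+1) - dims s →
        dims (m+1) - dims (s+1) ≤ (q : ℕ) → (q : ℕ) < dims (m+1) - dims s →
        (α m * β m) p q =
          if p = q then -(∑ t ∈ Finset.Icc (s+1) m, lam t) else 0)) ∧
    (∀ X : Matrix (Fin (dims (m+1))) (Fin (dims (m+1))) ℂ,
      (∀ s, 1 ≤ s → s ≤ m → ∀ p q : Fin (dims (m+1)),
        (q : ℕ) < dims (m+1) - dims s → dims (m+1) - dims s ≤ (p : ℕ) →
        X p q = 0) →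
      (∀ s ≤ m, ∀ p q : Fin (dims (m+1)),
        dims (m+1) - dims (s+1) ≤ (p : ℕ) → (p : ℕ) < dims (m+1) - dims s →
        dims (m+1) - dims (s+1) ≤ (q : ℕ) → (q : ℕ) < dims (m+1) - dims s →
        X p q = if p = q then -(∑ t ∈ Finset.Icc (s+1) m, lam t) else 0) →
      ∃ α : ∀ i : ℕ, Matrix (Fin (dims (i+1))) (Fin (dims i)) ℂ,
        (∀ j < m, α j * stdBeta (dims j) (dims (j+1)) -
          stdBeta (dims (j+1)) (dims (j+2)) * α (j+1) =
            lam (j+1) • (1 : Matrix (Fin (dims (j+1))) (Fin (dims (j+1))) ℂ)) ∧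
        α m * stdBeta (dims m) (dims (m+1)) = X) :=
  statement17_general m dims h0 hmono lam
end

section
/- Fix a strictly ordered dimension vector 0 < n_1 < n_2 < … < n_r = n (set n_0 = 0, k_i = n_{i+1} − n_i) and let β_i = (0_{n_i×k_i} ∣ I_{n_i}) be the standard projections. Suppose (α, β) satisfies the complex moment map equations at level (λ_1,…,λ_{r−1}) and (α', β) satisfies them at level (λ'_1,…,λ'_{r−1}), where β denotes the same standard maps in both quivers. If α_{r−1} β_{r−1} = α'_{r−1} β_{r−1}, then α_i = α'_i for all i = 1,…,r−1 and λ_i = λ'_i for all i; that is, with the β's standardised, the whole quiver diagram and the level are determined by X = α_{r−1}β_{r−1}. -/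
open Matrix

lemma stdBeta_mul_transpose {a b : ℕ} (h : a ≤ b) : stdBeta a b * (stdBeta a b)ᵀ = 1 := by
  ext j j'
  rw [mul_apply, Finset.sum_eq_single (⟨j + (b - a), by omega⟩ : Fin b)]
  · simp [stdBeta, one_apply, Fin.ext_iff]
  · intro k _ hk
    simp [stdBeta, Fin.ext_iff] at hk ⊢
    omega
  · simp

lemma stdBeta_cancel_right {n a b : ℕ} (h : a ≤ b) {M N : Matrix (Fin n) (Fin a) ℂ}
    (hMN : M * stdBeta a b = N * stdBeta a b) : M = N := by
  simpa [Matrix.mul_assoc, stdBeta_mul_transpose h] using congrArg (· * (stdBeta a b)ᵀ) hMN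

lemma mul_stdBeta_apply_zero {n a b : ℕ} (h : a < b) (M : Matrix (Fin n) (Fin a) ℂ)
    (i : Fin n) : (M * stdBeta a b) i ⟨0, by omega⟩ = 0 := by
  rw [mul_apply]
  refine Finset.sum_eq_zero fun k _ => ?_
  simp [stdBeta]
  omega

lemma eq_and_eq_of_mul_stdBeta_sub_eq_smul_one {a b : ℕ} (h : a < b)
    {A A' : Matrix (Fin b) (Fin a) ℂ} {B : Matrix (Fin b) (Fin b) ℂ} {l l' : ℂ}
    (hA : A * stdBeta a b - B = l • 1) (hA' : A' * stdBeta a b - B = l' • 1) :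
    A = A' ∧ l = l' := by
  have hdiff : (A - A') * stdBeta a b = (l - l') • 1 := by
    rw [Matrix.sub_mul, sub_smul, ← hA, ← hA']
    abel
  have hl : l - l' = 0 := by
    simpa [hdiff] using mul_stdBeta_apply_zero h (A - A') ⟨0, by omega⟩
  rw [hl, zero_smul, ← Matrix.zero_mul (stdBeta a b)] at hdiff
  exact ⟨sub_eq_zero.mp (stdBeta_cancel_right h.le hdiff), sub_eq_zero.mp hl⟩

theorem statement18_general (m : ℕ) (dims : ℕ → ℕ)
    (hmono : ∀ i ≤ m, dims i < dims (i+1))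
    (lam lam' : ℕ → ℂ)
    (α α' : ∀ i : ℕ, Matrix (Fin (dims (i+1))) (Fin (dims i)) ℂ)
    (hmm : ∀ j < m, α j * stdBeta (dims j) (dims (j+1)) -
      stdBeta (dims (j+1)) (dims (j+2)) * α (j+1) =
        lam (j+1) • (1 : Matrix (Fin (dims (j+1))) (Fin (dims (j+1))) ℂ))
    (hmm' : ∀ j < m, α' j * stdBeta (dims j) (dims (j+1)) -
      stdBeta (dims (j+1)) (dims (j+2)) * α' (j+1) =
        lam' (j+1) • (1 : Matrix (Fin (dims (j+1))) (Fin (dims (j+1))) ℂ))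
    (hX : α m * stdBeta (dims m) (dims (m+1)) = α' m * stdBeta (dims m) (dims (m+1))) :
    (∀ i, 1 ≤ i → i ≤ m → α i = α' i) ∧ (∀ i, 1 ≤ i → i ≤ m → lam i = lam' i) := by
  have step : ∀ j < m, α (j+1) = α' (j+1) → α j = α' j ∧ lam (j+1) = lam' (j+1) :=
    fun j hj heq => eq_and_eq_of_mul_stdBeta_sub_eq_smul_one (hmono j hj.le) (hmm j hj)
      (heq ▸ hmm' j hj)
  have hα : ∀ i ≤ m, α i = α' i := fun i hi =>
    Nat.decreasingInduction (motive := fun k _ => α k = α' k) (fun k hk ih => (step k hk ih).1)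
      (stdBeta_cancel_right (hmono m le_rfl).le hX) hi
  refine ⟨fun i _ hi => hα i hi, fun i h1 hi => ?_⟩
  obtain ⟨j, rfl⟩ : ∃ j, i = j + 1 := ⟨i - 1, by omega⟩
  exact (step j (by omega) (hα (j+1) hi)).2

/-- (Here the paper's `r` is `m + 1`, with a strictly
ordered dimension vector `0 = dims 0 < dims 1 < … < dims (m+1) = n`; the
quiver maps are `α i : ℂ^(dims i) → ℂ^(dims (i+1))` together with the
standard maps `β i = stdBeta (dims i) (dims (i+1))`.)

If `(α, stdBeta)` satisfies the complex moment map equations at level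
`(λ_1, …, λ_m)` and `(α', stdBeta)` satisfies them at level `(λ'_1, …, λ'_m)`,
and if `α_m β_m = α'_m β_m`, then `α_i = α'_i` and `λ_i = λ'_i` for all
`i = 1, …, m`: with the `β`'s standardised, the whole quiver diagram and the
level are determined by `X = α_m β_m`. -/
theorem statement18 (m : ℕ) (dims : ℕ → ℕ) (h0 : dims 0 = 0)
    (hmono : ∀ i ≤ m, dims i < dims (i+1))
    (lam lam' : ℕ → ℂ)
    (α α' : ∀ i : ℕ, Matrix (Fin (dims (i+1))) (Fin (dims i)) ℂ)
    (hmm : ∀ j < m, α j * stdBeta (dims j) (dims (j+1)) -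
      stdBeta (dims (j+1)) (dims (j+2)) * α (j+1) =
        lam (j+1) • (1 : Matrix (Fin (dims (j+1))) (Fin (dims (j+1))) ℂ))
    (hmm' : ∀ j < m, α' j * stdBeta (dims j) (dims (j+1)) -
      stdBeta (dims (j+1)) (dims (j+2)) * α' (j+1) =
        lam' (j+1) • (1 : Matrix (Fin (dims (j+1))) (Fin (dims (j+1))) ℂ))
    (hX : α m * stdBeta (dims m) (dims (m+1)) = α' m * stdBeta (dims m) (dims (m+1))) :
    (∀ i, 1 ≤ i → i ≤ m → α i = α' i) ∧ (∀ i, 1 ≤ i → i ≤ m → lam i = lam' i) :=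
  statement18_general m dims hmono lam lam' α α' hmm hmm' hX
end

section
/- Fix integers r ≥ 2 and 0 = n_0 ≤ n_1 ≤ … ≤ n_r = n, and a quiver (α, β) whose orbit under H_ℂ = ∏_{i=1}^{r−1} SL(n_i,ℂ) is a closed subset of the product matrix space. Suppose that for every nonzero τ ∈ ℂ there exists g ∈ H_ℂ with g · (α, β) = (α, τ β) (where τ β denotes scalar multiplication of every β_i by τ). Then β_i = 0 for all i. In other words, the fixed points of the ℂ*-action scaling the maps β, among quivers with closed H_ℂ-orbit, are exactly represented by quivers with all β_i = 0. -/
/-- The action of `(g_i) ∈ ∏ SL(dims i, ℂ)` on the maps `α` of a quiver: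
`α_i ↦ g_{i+1} α_i g_i⁻¹`. -/
noncomputable def slActA (dims : ℕ → ℕ)
    (g : ∀ i : ℕ, Matrix.SpecialLinearGroup (Fin (dims i)) ℂ)
    (α : ∀ i : ℕ, Matrix (Fin (dims (i+1))) (Fin (dims i)) ℂ) :
    ∀ i : ℕ, Matrix (Fin (dims (i+1))) (Fin (dims i)) ℂ :=
  fun i => (↑(g (i+1)) : Matrix (Fin (dims (i+1))) (Fin (dims (i+1))) ℂ) * α i *
    (↑((g i)⁻¹) : Matrix (Fin (dims i)) (Fin (dims i)) ℂ)

/-- The action of `(g_i) ∈ ∏ SL(dims i, ℂ)` on the maps `β` of a quiver: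
`β_i ↦ g_i β_i g_{i+1}⁻¹`. -/
noncomputable def slActB (dims : ℕ → ℕ)
    (g : ∀ i : ℕ, Matrix.SpecialLinearGroup (Fin (dims i)) ℂ)
    (β : ∀ i : ℕ, Matrix (Fin (dims i)) (Fin (dims (i+1))) ℂ) :
    ∀ i : ℕ, Matrix (Fin (dims i)) (Fin (dims (i+1))) ℂ :=
  fun i => (↑(g i) : Matrix (Fin (dims i)) (Fin (dims i)) ℂ) * β i *
    (↑((g (i+1))⁻¹) : Matrix (Fin (dims (i+1))) (Fin (dims (i+1))) ℂ)

/-- (Here the paper's `r` is `m + 1`, so `r ≥ 2` is `1 ≤ m`;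
the quiver maps are `α i : ℂ^(dims i) → ℂ^(dims (i+1))` and
`β i : ℂ^(dims (i+1)) → ℂ^(dims i)` for `i = 0, …, m`, with `dims 0 = 0`.
The group element acts with `g_{m+1} = 1`, and components of index `> m` are
unaffected.)

Suppose the orbit of `(α, β)` under `H_ℂ = ∏_{i=1}^{m} SL(dims i, ℂ)` is
closed in the product matrix space, and for every nonzero `τ ∈ ℂ` there is
`g ∈ H_ℂ` with `g · (α, β) = (α, τ β)`.  Then `β_i = 0` for all
`i = 1, …, m`. -/
theorem statement19 (m : ℕ) (hm : 1 ≤ m) (dims : ℕ → ℕ) (h0 : dims 0 = 0)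
    (hmono : ∀ i ≤ m, dims i ≤ dims (i+1))
    (α : ∀ i : ℕ, Matrix (Fin (dims (i+1))) (Fin (dims i)) ℂ)
    (β : ∀ i : ℕ, Matrix (Fin (dims i)) (Fin (dims (i+1))) ℂ)
    (hclosed : IsClosed {q : (∀ i : ℕ, Matrix (Fin (dims (i+1))) (Fin (dims i)) ℂ) ×
          (∀ i : ℕ, Matrix (Fin (dims i)) (Fin (dims (i+1))) ℂ) |
        ∃ g : ∀ i : ℕ, Matrix.SpecialLinearGroup (Fin (dims i)) ℂ,
          g (m+1) = 1 ∧
          (∀ i ≤ m, q.1 i = slActA dims g α i ∧ q.2 i = slActB dims g β i) ∧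
          (∀ i, m + 1 ≤ i → q.1 i = α i ∧ q.2 i = β i)})
    (hfix : ∀ τ : ℂ, τ ≠ 0 →
      ∃ g : ∀ i : ℕ, Matrix.SpecialLinearGroup (Fin (dims i)) ℂ,
        g (m+1) = 1 ∧
        ∀ i ≤ m, slActA dims g α i = α i ∧ slActB dims g β i = τ • β i) :
    ∀ i, 1 ≤ i → i ≤ m → β i = 0 := by
  classical
  set S := {q : (∀ i : ℕ, Matrix (Fin (dims (i+1))) (Fin (dims i)) ℂ) ×
          (∀ i : ℕ, Matrix (Fin (dims i)) (Fin (dims (i+1))) ℂ) |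
        ∃ g : ∀ i : ℕ, Matrix.SpecialLinearGroup (Fin (dims i)) ℂ,
          g (m+1) = 1 ∧
          (∀ i ≤ m, q.1 i = slActA dims g α i ∧ q.2 i = slActB dims g β i) ∧
          (∀ i, m + 1 ≤ i → q.1 i = α i ∧ q.2 i = β i)} with hS
  -- the curve τ ↦ (α, τ • β on indices ≤ m)
  set F : ℂ → (∀ i : ℕ, Matrix (Fin (dims (i+1))) (Fin (dims i)) ℂ) ×
      (∀ i : ℕ, Matrix (Fin (dims i)) (Fin (dims (i+1))) ℂ) :=
    fun τ => (α, fun i => if i ≤ m then τ • β i else β i) with hF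
  have hcont : Continuous F := by
    apply Continuous.prodMk continuous_const
    apply continuous_pi
    intro i
    by_cases hi : i ≤ m
    · simp only [hi, if_true]
      exact continuous_id.smul continuous_const
    · simp only [hi, if_false]
      exact continuous_const
  have hmem : ∀ τ : ℂ, τ ≠ 0 → F τ ∈ S := by
    intro τ hτ
    obtain ⟨g, hg1, hg2⟩ := hfix τ hτ
    refine ⟨g, hg1, ?_, ?_⟩
    · intro i hi
      refine ⟨((hg2 i hi).1).symm, ?_⟩
      simp only [hF, hi, if_true]
      exact ((hg2 i hi).2).symm
    · intro i hi
      have : ¬ i ≤ m := by omega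
      simp [hF, this]
  have htend : Filter.Tendsto F (nhdsWithin (0:ℂ) {(0:ℂ)}ᶜ) (nhds (F 0)) :=
    (hcont.tendsto 0).mono_left nhdsWithin_le_nhds
  have hF0 : F 0 ∈ S := by
    refine hclosed.mem_of_tendsto htend ?_
    filter_upwards [self_mem_nhdsWithin] with τ hτ
    exact hmem τ hτ
  obtain ⟨g, hg1, hg2, hg3⟩ := hF0
  intro i hi1 hi2
  have hz : slActB dims g β i = 0 := by
    have := (hg2 i hi2).2
    simp only [hF, hi2, if_true, zero_smul] at this
    exact this.symm
  have key : (↑(g i) : Matrix (Fin (dims i)) (Fin (dims i)) ℂ) * β i *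
      (↑((g (i+1))⁻¹) : Matrix (Fin (dims (i+1))) (Fin (dims (i+1))) ℂ) = 0 := hz
  have h1 : (↑((g i)⁻¹) : Matrix (Fin (dims i)) (Fin (dims i)) ℂ) *
      (↑(g i) : Matrix (Fin (dims i)) (Fin (dims i)) ℂ) = 1 := by
    simp [Matrix.SpecialLinearGroup.coe_inv, Matrix.adjugate_mul, (g i).2]
  have h2 : (↑((g (i+1))⁻¹) : Matrix (Fin (dims (i+1))) (Fin (dims (i+1))) ℂ) *
      (↑(g (i+1)) : Matrix (Fin (dims (i+1))) (Fin (dims (i+1))) ℂ) = 1 := by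
    simp [Matrix.SpecialLinearGroup.coe_inv, Matrix.adjugate_mul, (g (i+1)).2]
  calc β i = (1 : Matrix (Fin (dims i)) (Fin (dims i)) ℂ) * β i *
        (1 : Matrix (Fin (dims (i+1))) (Fin (dims (i+1))) ℂ) := by rw [Matrix.one_mul, Matrix.mul_one]
    _ = ((↑((g i)⁻¹) : Matrix (Fin (dims i)) (Fin (dims i)) ℂ) * ↑(g i)) * β i *
        ((↑((g (i+1))⁻¹) : Matrix (Fin (dims (i+1))) (Fin (dims (i+1))) ℂ) * ↑(g (i+1))) := by
        rw [h1, h2]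
    _ = (↑((g i)⁻¹) : Matrix (Fin (dims i)) (Fin (dims i)) ℂ) *
        (((↑(g i) : Matrix (Fin (dims i)) (Fin (dims i)) ℂ) * β i *
          (↑((g (i+1))⁻¹) : Matrix (Fin (dims (i+1))) (Fin (dims (i+1))) ℂ)) *
          (↑(g (i+1)) : Matrix (Fin (dims (i+1))) (Fin (dims (i+1))) ℂ)) := by
        simp only [Matrix.mul_assoc]
    _ = 0 := by rw [key]; simp
end
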